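/- arXiv:2504.01359 — 7 statements merged into one kernel-verified Lean document; each statement's English description precedes it below -/
import Mathlib

section
/- Let A be a finite-dimensional real alternative algebra with unity, M ⊆ A a real subspace with basis v₀ = 1, v₁, …, v_m, and let x₁, …, x_n ∈ M. Then for any element a ∈ A and any multiset of indices drawn from {1,…,m}, the sum over all distinguishable permutations (i₁,…,i_k) of that multiset of the products (x_{i₁} x_{i₂} ⋯ x_{i_k} a), computed with a fixed parenthesization, is independent of the chosen parenthesization. In particular the left-to-right bracketed sum equals the right-to-left bracketed sum: ∑_σ ((⋯((x_{i₁} x_{i₂}) x_{i₃}) ⋯) x_{i_k}) a = ∑_σ x_{i₁}( x_{i₂}( ⋯ (x_{i_k} a)⋯)). -/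
/-!
Fix a bracketing `t` of `k + 1` factors whose last factor is `a`. The map
`(y₁, …, y_k) ↦ t(y₁, …, y_k, a)` is additive in each argument, and on the diagonal it is
`y ^ k * a` whatever `t` is, because in an alternative ring without additive torsion left
multiplications by powers compose: `y ^ m * (y ^ n * c) = y ^ (m + n) * c`. The polarization
identity `∑_σ F (x_{σ 1}, …, x_{σ k}) = ∑_{S ⊆ {1, …, k}} (-1) ^ (k - |S|) F (x_S, …, x_S)`, where
`x_S = ∑_{i ∈ S} x_i`, shows that the symmetrization of a multiadditive map `F` only depends on
its diagonal, so the sum over all `k!` orderings of the factors does not depend on `t`. Every distinguishable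
rearrangement of the factors occurs equally often among these orderings, and `A` has no additive
torsion, so the sum over distinguishable rearrangements does not depend on `t` either.
-/

/-- A full binary tree with `n` leaves, encoding a parenthesization (associative order)
of a product of `n` factors. -/
inductive BracketTree : ℕ → Type
  | leaf : BracketTree 1
  | node {p q : ℕ} : BracketTree p → BracketTree q → BracketTree (p + q)

/-- Evaluate a parenthesization tree on (the first `n` entries of) a list,
using `d` as a default value. -/
def BracketTree.evalList {A : Type*} [Mul A] (d : A) :
    ∀ {n : ℕ}, BracketTree n → List A → A
  | _, .leaf, l => l.headD d
  | _, .node (p := p) t₁ t₂, l => t₁.evalList d (l.take p) * t₂.evalList d (l.drop p)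

open Finset

section Alternative

variable {A : Type*} [NonAssocRing A]
  (hl : ∀ a b : A, a * a * b = a * (a * b)) (hr : ∀ a b : A, a * b * b = a * (b * b))

include hl in
theorem associator_swap_left (a b c : A) : associator a b c = -associator b a c := by
  have h := hl (a + b) c
  simp only [add_mul, mul_add, hl a c, hl b c] at h
  rw [associator, associator]
  linear_combination (norm := skip) h
  abel

include hr in
theorem associator_swap_right (a b c : A) : associator a b c = -associator a c b := by
  have h := hr a (b + c)
  simp only [add_mul, mul_add, hr a b, hr a c] at h
  rw [associator, associator]
  linear_combination (norm := skip) h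
  abel

include hl hr in
theorem associator_self_left_right (a b : A) : associator a b a = 0 := by
  rw [associator_swap_right hr, associator_swap_left hl, associator, hl, sub_self, neg_zero,
    neg_zero]

variable [IsAddTorsionFree A]

include hl hr in
theorem associator_npowRec_left_eq_zero_and_commute (y : A) (m : ℕ) :
    (∀ d, associator (npowRec m y) y d = 0) ∧ Commute (npowRec m y) y := by
  induction m with
  | zero => exact ⟨fun d => by simp [npowRec, associator], Commute.one_left y⟩
  | succ m ih =>
    obtain ⟨hassoc, hcomm⟩ := ih
    have hflex := associator_self_left_right hl hr y (npowRec m y)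
    rw [npowRec]
    refine ⟨fun d => ?_, ?_⟩
    · -- Teichmüller's identity for `(y, y ^ m, y, d)` leaves twice the wanted associator.
      have h := associator_cocycle y (npowRec m y) y d
      rw [hassoc, associator_swap_left hl y _ (y * d), hassoc, hflex, ← hcomm.eq,
        associator_swap_left hl y, mul_zero, zero_mul, neg_zero] at h
      have h2 : 2 • associator (npowRec m y * y) y d = 0 := by
        rw [two_nsmul]
        linear_combination (norm := skip) -h
        abel
      exact (smul_eq_zero.mp h2).resolve_left two_ne_zero
    · calc npowRec m y * y * y = y * npowRec m y * y := by rw [hcomm.eq]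
        _ = y * (npowRec m y * y) := sub_eq_zero.mp hflex

include hl hr in
theorem npowRec_succ_mul (y d : A) (m : ℕ) : npowRec (m + 1) y * d = npowRec m y * (y * d) :=
  sub_eq_zero.mp ((associator_npowRec_left_eq_zero_and_commute hl hr y m).1 d)

include hl hr in
theorem npowRec_add_mul (y c : A) (m n : ℕ) :
    npowRec (m + n) y * c = npowRec m y * (npowRec n y * c) := by
  induction n generalizing c with
  | zero => rw [Nat.add_zero, npowRec, one_mul]
  | succ n ih => rw [← Nat.add_assoc, npowRec_succ_mul hl hr, ih, npowRec_succ_mul hl hr]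

end Alternative

section Polarization

variable {ι : Type*} [Fintype ι] [DecidableEq ι]

theorem Finset.sum_superset_neg_one_pow_card_compl (T : Finset ι) :
    ∑ S with T ⊆ S, (-1 : ℤ) ^ #Sᶜ = if T = univ then 1 else 0 := by
  simp only [← compl_eq_empty_iff]
  rw [← sum_powerset_neg_one_pow_card]
  exact sum_nbij' compl compl (fun S hS => by simpa [subset_compl_comm] using hS)
    (fun S hS => by simpa [subset_compl_comm] using hS) (fun S _ => compl_compl S)
    (fun S _ => compl_compl S) (fun S _ => rfl)

theorem Equiv.Perm.sum_eq_sum_surjective {N : Type*} [AddCommMonoid N] (G : (ι → ι) → N) :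
    ∑ σ : Equiv.Perm ι, G σ = ∑ f : ι → ι with f.Surjective, G f := by
  refine sum_bij (fun σ _ => ⇑σ) (fun σ _ => by simpa using σ.surjective)
    (fun σ _ τ _ h => Equiv.coe_inj.mp h) (fun f hf => ?_) (fun _ _ => rfl)
  have hf : f.Bijective := Finite.surjective_iff_bijective.mp (by simpa using hf)
  exact ⟨Equiv.ofBijective f hf, mem_univ _, rfl⟩

variable {R M N : Type*} [Semiring R] [AddCommMonoid M] [AddCommGroup N] [Module R M]
  [Module R N]

theorem MultilinearMap.sum_perm_apply_comp (F : MultilinearMap R (fun _ : ι => M) N)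
    (x : ι → M) :
    ∑ σ : Equiv.Perm ι, F (x ∘ σ) =
      ∑ S : Finset ι, (-1 : ℤ) ^ #Sᶜ • F (fun _ => ∑ i ∈ S, x i) := by
  have hpi (S : Finset ι) :
      Fintype.piFinset (fun _ : ι => S) = univ.filter (univ.image · ⊆ S) := by
    ext f; simp [image_subset_iff]
  have himage (f : ι → ι) : univ.image f = univ ↔ f.Surjective := by
    simp [eq_univ_iff_forall, Function.Surjective]
  calc ∑ σ : Equiv.Perm ι, F (x ∘ σ)
      = ∑ f : ι → ι, (if univ.image f = univ then 1 else 0 : ℤ) • F (x ∘ f) := by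
        simp only [ite_smul, one_smul, zero_smul, ← sum_filter, himage]
        exact Equiv.Perm.sum_eq_sum_surjective (fun f => F (x ∘ f))
    _ = ∑ f : ι → ι, ∑ S : Finset ι,
          (if univ.image f ⊆ S then (-1) ^ #Sᶜ else 0 : ℤ) • F (x ∘ f) := by
        simp only [← sum_smul, ← sum_filter, sum_superset_neg_one_pow_card_compl]
    _ = _ := by
        rw [sum_comm]
        refine sum_congr rfl fun S _ => ?_
        rw [F.map_sum_finset, hpi, smul_sum, sum_filter]
        simp only [ite_smul, zero_smul]
        rfl

theorem MultilinearMap.sum_perm_apply_comp_eq_of_apply_const_eq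
    {F G : MultilinearMap R (fun _ : ι => M) N} (h : ∀ z, F (fun _ => z) = G (fun _ => z))
    (x : ι → M) : ∑ σ : Equiv.Perm ι, F (x ∘ σ) = ∑ σ : Equiv.Perm ι, G (x ∘ σ) := by
  simp only [MultilinearMap.sum_perm_apply_comp, h]

end Polarization

theorem Equiv.Perm.card_filter_comp_eq_comp {ι β : Type*} [Fintype ι] [DecidableEq ι]
    [DecidableEq β] (f : ι → β) (τ : Equiv.Perm ι) :
    #{σ : Equiv.Perm ι | f ∘ σ = f ∘ τ} = #{σ : Equiv.Perm ι | f ∘ σ = f} := by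
  refine card_nbij' (· * τ⁻¹) (· * τ) (fun σ hσ => ?_) (fun σ hσ => ?_) (fun σ _ => by simp)
    (fun σ _ => by simp)
  · simp only [coe_filter, mem_univ, true_and, Set.mem_ofPred_eq] at hσ ⊢
    ext i
    simpa using congrFun hσ (τ⁻¹ i)
  · simp only [coe_filter, mem_univ, true_and, Set.mem_ofPred_eq] at hσ ⊢
    rw [Equiv.Perm.coe_mul, ← Function.comp_assoc, hσ]

namespace List

variable {α : Type*}

theorem ofFn_update {n : ℕ} [DecidableEq (Fin n)] (w : Fin n → α) (i : Fin n) (b : α) :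
    ofFn (Function.update w i b) = (ofFn w).set i b := by
  refine ext_getElem (by simp) fun j _ hj => ?_
  simp [Function.update_apply, getElem_set, Fin.ext_iff, eq_comm]

theorem Perm.exists_equiv_getElem_eq {l₁ l₂ : List α} (h : l₁ ~ l₂) :
    ∃ e : Fin l₁.length ≃ Fin l₂.length, ∀ i : Fin l₁.length, l₂[(e i : ℕ)] = l₁[(i : ℕ)] := by
  induction h with
  | nil => exact ⟨Equiv.refl _, fun i => i.elim0⟩
  | cons x _ ih =>
    obtain ⟨e, he⟩ := ih
    refine ⟨(finSuccEquiv _).trans (e.optionCongr.trans (finSuccEquiv _).symm), fun i => ?_⟩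
    cases i using Fin.cases <;> simp [he]
  | swap x y l =>
    refine ⟨Equiv.swap 0 1, fun i => ?_⟩
    rcases i with ⟨_ | _ | i, hi⟩ <;> simp [Equiv.swap_apply_def, Fin.ext_iff]
  | trans _ _ ih₁ ih₂ =>
    obtain ⟨e₁, he₁⟩ := ih₁
    obtain ⟨e₂, he₂⟩ := ih₂
    exact ⟨e₁.trans e₂, fun i => by simp [he₁, he₂]⟩

variable [DecidableEq α]

theorem image_ofFn_get_comp_perm (l : List α) :
    univ.image (fun σ : Equiv.Perm (Fin l.length) => ofFn (l.get ∘ σ)) =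
      l.permutations.toFinset := by
  ext l'
  simp only [mem_image, mem_univ, true_and, mem_toFinset, mem_permutations]
  constructor
  · rintro ⟨σ, rfl⟩
    simpa using σ.ofFn_comp_perm l.get
  · intro h
    obtain ⟨e, he⟩ := h.exists_equiv_getElem_eq
    refine ⟨(finCongr h.length_eq).symm.trans e, ext_get (by simp [h.length_eq]) fun i _ hi => ?_⟩
    simp [he]

theorem sum_perm_ofFn_get_comp {M : Type*} [AddCommMonoid M] (l : List α) (H : List α → M) :
    ∑ σ : Equiv.Perm (Fin l.length), H (ofFn (l.get ∘ σ)) =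
      #{σ : Equiv.Perm (Fin l.length) | l.get ∘ σ = l.get} •
        ∑ l' ∈ l.permutations.toFinset, H l' := by
  rw [Finset.sum_comp, image_ofFn_get_comp_perm, Finset.smul_sum]
  refine sum_congr rfl fun l' hl' => ?_
  rw [← image_ofFn_get_comp_perm] at hl'
  obtain ⟨τ, -, rfl⟩ := mem_image.mp hl'
  simp only [ofFn_inj, Equiv.Perm.card_filter_comp_eq_comp]

theorem sum_permutations_toFinset_eq_of_sum_perm_eq {M : Type*} [AddCommMonoid M]
    [IsAddTorsionFree M] {l : List α} {H₁ H₂ : List α → M}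
    (h : ∑ σ : Equiv.Perm (Fin l.length), H₁ (ofFn (l.get ∘ σ)) =
      ∑ σ : Equiv.Perm (Fin l.length), H₂ (ofFn (l.get ∘ σ))) :
    ∑ l' ∈ l.permutations.toFinset, H₁ l' = ∑ l' ∈ l.permutations.toFinset, H₂ l' := by
  rw [sum_perm_ofFn_get_comp, sum_perm_ofFn_get_comp] at h
  exact nsmul_right_injective (card_ne_zero.mpr ⟨1, by simp⟩) h

end List

namespace BracketTree

theorem pos : ∀ {n : ℕ}, BracketTree n → 0 < n
  | _, leaf => Nat.one_pos
  | _, node t₁ _ => Nat.add_pos_left t₁.pos _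

def leftComb : (n : ℕ) → BracketTree (n + 1)
  | 0 => leaf
  | n + 1 => node (leftComb n) leaf

def rightComb : (n : ℕ) → BracketTree (n + 1)
  | 0 => leaf
  | n + 1 => Nat.add_comm 1 (n + 1) ▸ node leaf (rightComb n)

variable {A : Type*}

theorem evalList_cast [Mul A] {m n : ℕ} (h : m = n) (t : BracketTree m) (d : A) (w : List A) :
    (h ▸ t).evalList d w = t.evalList d w := by
  subst h; rfl

section Comb

variable [MulOneClass A] [Zero A]

theorem evalList_leftComb_append (n : ℕ) (w : List A) (hw : w.length = n) (b : A) :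
    (leftComb n).evalList 0 (w ++ [b]) = w.foldl (· * ·) 1 * b := by
  induction n generalizing w b with
  | zero => simp [List.eq_nil_of_length_eq_zero hw, leftComb, evalList]
  | succ n ih =>
    obtain ⟨w, c, rfl⟩ := (w.eq_nil_or_concat').resolve_left (by rintro rfl; simp at hw)
    have hw : w.length = n := by simpa using hw
    rw [leftComb, evalList, List.take_left' (by simp [hw]), List.drop_left' (by simp [hw]),
      ih w hw, List.foldl_concat]
    rfl

theorem evalList_rightComb_append (n : ℕ) (w : List A) (hw : w.length = n) (b : A) :
    (rightComb n).evalList 0 (w ++ [b]) = w.foldr (· * ·) b := by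
  subst hw
  induction w with
  | nil => rfl
  | cons c w ih =>
    rw [List.length_cons, rightComb, evalList_cast, evalList]
    exact congrArg (c * ·) ih

end Comb

section Multilinear

variable (R : Type*) [Semiring R] [NonUnitalNonAssocSemiring A] [Module R A]
  [SMulCommClass R A A] [IsScalarTower R A A]

theorem exists_linearMap_evalList_set {n : ℕ} (t : BracketTree n) (w : List A)
    (hw : w.length = n) (i : ℕ) (hi : i < n) :
    ∃ f : A →ₗ[R] A, ∀ b, t.evalList 0 (w.set i b) = f b := by
  induction t generalizing w i with
  | leaf =>
    obtain ⟨x, rfl⟩ := List.length_eq_one_iff.mp hw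
    obtain rfl : i = 0 := by omega
    exact ⟨LinearMap.id, fun b => rfl⟩
  | @node p q t₁ t₂ ih₁ ih₂ =>
    simp only [evalList, List.take_set, List.drop_set]
    by_cases hip : i < p
    · obtain ⟨f, hf⟩ := ih₁ (w.take p) (by simp; omega) i hip
      exact ⟨LinearMap.mulRight R (t₂.evalList 0 (w.drop p)) ∘ₗ f, fun b => by simp [hf, hip]⟩
    · obtain ⟨f, hf⟩ := ih₂ (w.drop p) (by simp; omega) (i - p) (by omega)
      refine ⟨LinearMap.mulLeft R (t₁.evalList 0 (w.take p)) ∘ₗ f, fun b => ?_⟩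
      rw [List.set_eq_of_length_le (by simp; omega), if_neg hip, hf]
      rfl

theorem exists_linearMap_evalList_ofFn_update_append {n : ℕ} [DecidableEq (Fin n)]
    (t : BracketTree (n + 1)) (a : A) (w : Fin n → A) (i : Fin n) :
    ∃ f : A →ₗ[R] A, ∀ b, t.evalList 0 (List.ofFn (Function.update w i b) ++ [a]) = f b := by
  obtain ⟨f, hf⟩ := t.exists_linearMap_evalList_set R (List.ofFn w ++ [a]) (by simp) i (by omega)
  refine ⟨f, fun b => ?_⟩
  rw [List.ofFn_update, ← List.set_append_left _ _ (by simp), hf]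

def multilinear {n : ℕ} (t : BracketTree (n + 1)) (a : A) :
    MultilinearMap R (fun _ : Fin n => A) A where
  toFun w := t.evalList 0 (List.ofFn w ++ [a])
  map_update_add' w i b c := by
    obtain ⟨f, hf⟩ := t.exists_linearMap_evalList_ofFn_update_append R a w i
    simp only [hf, map_add]
  map_update_smul' w i c b := by
    obtain ⟨f, hf⟩ := t.exists_linearMap_evalList_ofFn_update_append R a w i
    simp only [hf, map_smul]

theorem multilinear_apply {n : ℕ} (t : BracketTree (n + 1)) (a : A) (w : Fin n → A) :
    t.multilinear R a w = t.evalList 0 (List.ofFn w ++ [a]) := rfl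

end Multilinear

section Alternative

variable [NonAssocRing A] [IsAddTorsionFree A]
  (hl : ∀ a b : A, a * a * b = a * (a * b)) (hr : ∀ a b : A, a * b * b = a * (b * b))

include hl hr in
theorem evalList_replicate_append {m : ℕ} (t : BracketTree m) (n : ℕ) (hmn : m = n + 1)
    (z a : A) : t.evalList 0 (List.replicate n z ++ [a]) = npowRec n z * a := by
  induction t generalizing n a with
  | leaf =>
    obtain rfl : n = 0 := by omega
    simp [evalList, npowRec]
  | @node p q t₁ t₂ ih₁ ih₂ =>
    obtain ⟨p, rfl⟩ := Nat.exists_eq_add_one.mpr t₁.pos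
    obtain ⟨q, rfl⟩ := Nat.exists_eq_add_one.mpr t₂.pos
    obtain rfl : n = p + 1 + q := by omega
    rw [evalList, List.take_append_of_le_length (by simp), List.take_replicate,
      List.drop_append_of_le_length (by simp), List.drop_replicate, min_eq_left (by omega),
      Nat.add_sub_cancel_left, List.replicate_succ', ih₁ p rfl, ih₂ q rfl, npowRec_add_mul hl hr]
    rfl

end Alternative

end BracketTree

theorem symmetrized_product_bracketing_independent_general {A : Type*} [NonAssocRing A] [DecidableEq A]
    [Module ℝ A]
    (hLA : ∀ a b : A, (a * a) * b = a * (a * b))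
    (hRA : ∀ a b : A, (a * b) * b = a * (b * b))
    (k : ℕ) (l : List A) (hlen : l.length = k) (a : A) :
    (∀ t₁ t₂ : BracketTree (k + 1),
      ∑ l' ∈ l.permutations.toFinset, t₁.evalList 0 (l' ++ [a]) =
      ∑ l' ∈ l.permutations.toFinset, t₂.evalList 0 (l' ++ [a])) ∧
    ∑ l' ∈ l.permutations.toFinset, (l'.foldl (· * ·) 1) * a =
      ∑ l' ∈ l.permutations.toFinset, l'.foldr (· * ·) a := by
  subst hlen
  have : IsAddTorsionFree A := .of_isTorsionFree ℝ A
  have diagonal (t : BracketTree (l.length + 1)) (z : A) :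
      t.multilinear ℤ a (fun _ => z) = npowRec l.length z * a := by
    rw [BracketTree.multilinear_apply, List.ofFn_const,
      BracketTree.evalList_replicate_append hLA hRA t _ rfl]
  have bracketing (t₁ t₂ : BracketTree (l.length + 1)) :
      ∑ l' ∈ l.permutations.toFinset, t₁.evalList 0 (l' ++ [a]) =
        ∑ l' ∈ l.permutations.toFinset, t₂.evalList 0 (l' ++ [a]) :=
    List.sum_permutations_toFinset_eq_of_sum_perm_eq <|
      MultilinearMap.sum_perm_apply_comp_eq_of_apply_const_eq
        (fun z => (diagonal t₁ z).trans (diagonal t₂ z).symm) l.get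
  refine ⟨bracketing, ?_⟩
  have hlength {l'} (hl' : l' ∈ l.permutations.toFinset) : l'.length = l.length :=
    (List.mem_permutations.mp (List.mem_toFinset.mp hl')).length_eq
  calc ∑ l' ∈ l.permutations.toFinset, l'.foldl (· * ·) 1 * a
      = ∑ l' ∈ l.permutations.toFinset, (BracketTree.leftComb _).evalList 0 (l' ++ [a]) :=
        sum_congr rfl fun l' hl' =>
          (BracketTree.evalList_leftComb_append _ l' (hlength hl') a).symm
    _ = ∑ l' ∈ l.permutations.toFinset, (BracketTree.rightComb _).evalList 0 (l' ++ [a]) :=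
        bracketing _ _
    _ = ∑ l' ∈ l.permutations.toFinset, l'.foldr (· * ·) a :=
        sum_congr rfl fun l' hl' => BracketTree.evalList_rightComb_append _ l' (hlength hl') a

/-- Let `A` be a finite-dimensional real alternative algebra with unity and `M ⊆ A` a real
subspace with basis `v 0 = 1, v 1, …, v m`.  Given elements of `M` (listed, with repetitions
allowed, in a list `l`) and `a ∈ A`, the sum over all distinguishable permutations `l'` of
`l` of the products `x_{i₁} ⋯ x_{i_k} a`, computed in a fixed parenthesization, does not
depend on the chosen parenthesization; in particular the left-to-right bracketed sum equals
the right-to-left bracketed sum. -/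
theorem symmetrized_product_bracketing_independent {A : Type*} [NonAssocRing A] [DecidableEq A]
    [Module ℝ A] [SMulCommClass ℝ A A] [IsScalarTower ℝ A A] [FiniteDimensional ℝ A]
    (hLA : ∀ a b : A, (a * a) * b = a * (a * b))
    (hRA : ∀ a b : A, (a * b) * b = a * (b * b))
    (m : ℕ) (M : Submodule ℝ A) (v : Fin (m + 1) → A) (hv : v 0 = 1)
    (hbasis : ∃ b : Module.Basis (Fin (m + 1)) ℝ M, ∀ s, (b s : A) = v s)
    (k : ℕ) (l : List A) (hlen : l.length = k) (hlM : ∀ x ∈ l, x ∈ M) (a : A) :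
    (∀ t₁ t₂ : BracketTree (k + 1),
      ∑ l' ∈ l.permutations.toFinset, t₁.evalList 0 (l' ++ [a]) =
      ∑ l' ∈ l.permutations.toFinset, t₂.evalList 0 (l' ++ [a])) ∧
    ∑ l' ∈ l.permutations.toFinset, (l'.foldl (· * ·) 1) * a =
      ∑ l' ∈ l.permutations.toFinset, l'.foldr (· * ·) a :=
  symmetrized_product_bracketing_independent_general hLA hRA k l hlen a
end

section
/- Let A be a real alternative algebra with hypercomplex basis v₀=1, v₁,…,v_m of subspace M ⊆ A, let Ω ⊆ ℝ^{m+1} be open, and suppose φ = ∑_{s=0}^m φₛ vₛ : Ω → M is C¹ with ∂ₛφ_t = ∂_tφₛ for all 1 ≤ s,t ≤ m. Then for every a ∈ A and every point of Ω, the Cauchy–Riemann operator applied to φ·a factors: ∂̄_B(φ a) = (∂̄_B φ) a, where ∂̄_B f := ∑_{s=0}^m vₛ ∂ₛf. -/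
/-!
Expanding both sides in the coordinates `φₜ`, their difference is
`∑ₛ,ₜ ∂ₛφₜ [vₛ, vₜ, a]`, with `[x, y, z] = (xy)z - x(yz)` the associator. In a left-alternative
algebra the associator is alternating in its first two arguments and vanishes when one of them is
the unit `v₀`, so the double sum pairs the symmetric coefficients `∂ₛφₜ = ∂ₜφₛ` (`s, t ≠ 0`)
against an antisymmetric factor and cancels.
-/

theorem Finset.sum_sum_eq_zero_of_antisymm {ι M : Type*} [Fintype ι] [AddCommGroup M]
    [IsAddTorsionFree M] (f : ι → ι → M) (hf : ∀ s t, f s t = -f t s) :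
    ∑ s, ∑ t, f s t = 0 :=
  self_eq_neg.mp <| calc
    ∑ s, ∑ t, f s t = ∑ t, ∑ s, -f t s := by rw [Finset.sum_comm]; simp_rw [← hf]
    _ = -∑ s, ∑ t, f s t := by simp only [Finset.sum_neg_distrib]

theorem fderiv_sum_smul_const_apply {𝕜 E F ι : Type*} [NontriviallyNormedField 𝕜]
    [NormedAddCommGroup E] [NormedSpace 𝕜 E] [NormedAddCommGroup F] [NormedSpace 𝕜 F]
    [Fintype ι] {φ : ι → E → 𝕜} {x : E} (hφ : ∀ i, DifferentiableAt 𝕜 (φ i) x)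
    (c : ι → F) (w : E) :
    fderiv 𝕜 (fun y => ∑ i, φ i y • c i) x w = ∑ i, fderiv 𝕜 (φ i) x w • c i := by
  rw [fderiv_fun_sum fun i _ => (hφ i).smul_const (c i), _root_.sum_apply]
  simp only [fderiv_smul_const (hφ _), ContinuousLinearMap.smulRight_apply]

namespace LinearMap

variable {R M : Type*} [CommRing R] [AddCommGroup M] [Module R M]

def associator (μ : M →ₗ[R] M →ₗ[R] M) (x y z : M) : M :=
  μ (μ x y) z - μ x (μ y z)

variable {μ : M →ₗ[R] M →ₗ[R] M}

theorem associator_self_left (hLA : ∀ x z, μ (μ x x) z = μ x (μ x z)) (x z : M) :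
    associator μ x x z = 0 :=
  sub_eq_zero.mpr (hLA x z)

theorem associator_swap (hLA : ∀ x z, μ (μ x x) z = μ x (μ x z)) (x y z : M) :
    associator μ x y z = -associator μ y x z := by
  have hxy := associator_self_left hLA (x + y) z
  simp only [associator, map_add, add_apply, hLA] at hxy
  rw [eq_neg_iff_add_eq_zero, ← hxy, associator, associator]
  abel

theorem associator_unit_left {e : M} (he : ∀ x, μ e x = x) (y z : M) :
    associator μ e y z = 0 := by
  simp only [associator, he, sub_self]

theorem associator_unit_middle (hLA : ∀ x z, μ (μ x x) z = μ x (μ x z)) {e : M}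
    (he : ∀ x, μ e x = x) (x z : M) : associator μ x e z = 0 := by
  rw [associator_swap hLA, associator_unit_left he, neg_zero]

section UnitBasis

variable {ι : Type*} [Fintype ι] (hLA : ∀ x z, μ (μ x x) z = μ x (μ x z)) {e : M}
  (he : ∀ x, μ e x = x) {v : ι → M} {i₀ : ι} (hv : v i₀ = e) {d : ι → ι → R}
  (hd : ∀ s t, s ≠ i₀ → t ≠ i₀ → d s t = d t s)
include hLA he hv hd

theorem sum_sum_smul_associator_eq_zero [IsAddTorsionFree M] (z : M) :
    ∑ s, ∑ t, d s t • associator μ (v s) (v t) z = 0 := by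
  refine Finset.sum_sum_eq_zero_of_antisymm _ fun s t => ?_
  by_cases hst : s = i₀ ∨ t = i₀
  · rcases hst with rfl | rfl <;>
      simp only [hv, associator_unit_left he, associator_unit_middle hLA he, smul_zero, neg_zero]
  rw [not_or] at hst
  rw [hd s t hst.1 hst.2, associator_swap hLA, smul_neg]

theorem sum_mul_sum_smul_mul_assoc [IsAddTorsionFree M] (z : M) :
    μ (∑ s, μ (v s) (∑ t, d s t • v t)) z = ∑ s, μ (v s) (∑ t, d s t • μ (v t) z) := by
  rw [← sub_eq_zero, ← sum_sum_smul_associator_eq_zero hLA he hv hd z]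
  simp only [associator, map_sum, map_smul, sum_apply, smul_apply, smul_sub,
    ← Finset.sum_sub_distrib]

end UnitBasis

end LinearMap

theorem cauchyRiemann_factor_right_mul_general {A : Type*} [NormedAddCommGroup A] [NormedSpace ℝ A]
    (μ : A →L[ℝ] A →L[ℝ] A) (e : A)
    (he : ∀ a : A, μ e a = a ∧ μ a e = a)
    (hLA : ∀ a b : A, μ (μ a a) b = μ a (μ a b))
    (m : ℕ) (v : Fin (m + 1) → A)
    (hv0 : v 0 = e)
    (Ω : Set ((Fin (m + 1)) → ℝ)) (hΩ : IsOpen Ω)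
    (φs : Fin (m + 1) → ((Fin (m + 1)) → ℝ) → ℝ)
    (hC1 : ∀ t, ContDiffOn ℝ 1 (φs t) Ω)
    (hsym : ∀ s t : Fin (m + 1), s ≠ 0 → t ≠ 0 → ∀ p ∈ Ω,
      fderiv ℝ (φs t) p (Pi.single s 1) = fderiv ℝ (φs s) p (Pi.single t 1))
    (a : A) (p : (Fin (m + 1)) → ℝ) (hp : p ∈ Ω) :
    ∑ s, μ (v s) (fderiv ℝ (fun q => μ (∑ t, φs t q • v t) a) p (Pi.single s 1)) =
      μ (∑ s, μ (v s) (fderiv ℝ (fun q => ∑ t, φs t q • v t) p (Pi.single s 1))) a := by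
  have hdiff : ∀ t, DifferentiableAt ℝ (φs t) p := fun t =>
    ((hC1 t).differentiableOn one_ne_zero).differentiableAt (hΩ.mem_nhds hp)
  have hmul : (fun q => μ (∑ t, φs t q • v t) a) = fun q => ∑ t, φs t q • μ (v t) a := by
    funext q
    simp only [map_sum, map_smul, FunLike.coe_sum, Finset.sum_apply, FunLike.coe_smul,
      Pi.smul_apply]
  simp only [hmul, fderiv_sum_smul_const_apply hdiff]
  have : IsAddTorsionFree A := .of_isTorsionFree ℝ A
  exact (LinearMap.sum_mul_sum_smul_mul_assoc (μ := μ.toLinearMap₁₂)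
    (d := fun s t => fderiv ℝ (φs t) p (Pi.single s 1)) (fun x z => hLA x z)
    (fun x => (he x).1) hv0 (fun s t hs ht => hsym s t hs ht p hp) a).symm

/-- Let `A` be a (finite-dimensional, normed) real alternative algebra with multiplication
the continuous bilinear map `μ` and unity `e`, with hypercomplex basis `v 0 = e, v 1, …, v m`
of a subspace of `A`.  If `φ = ∑ s, φs s • v s : Ω → M` is `C¹` on the open set
`Ω ⊆ ℝ^{m+1}` and `∂ₛ φ_t = ∂_t φₛ` for all `1 ≤ s, t ≤ m`, then for every `a ∈ A` and
every point of `Ω` the Cauchy–Riemann operator factors: `∂̄_B(φ a) = (∂̄_B φ) a`. -/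
theorem cauchyRiemann_factor_right_mul {A : Type*} [NormedAddCommGroup A] [NormedSpace ℝ A]
    [FiniteDimensional ℝ A]
    (μ : A →L[ℝ] A →L[ℝ] A) (e : A)
    (he : ∀ a : A, μ e a = a ∧ μ a e = a)
    (hLA : ∀ a b : A, μ (μ a a) b = μ a (μ a b))
    (hRA : ∀ a b : A, μ (μ a b) b = μ a (μ b b))
    (m : ℕ) (hm : 1 ≤ m) (v : Fin (m + 1) → A)
    (hv0 : v 0 = e)
    (hvsq : ∀ s, s ≠ 0 → μ (v s) (v s) = -e)
    (hvanti : ∀ s t, s ≠ 0 → t ≠ 0 → s ≠ t → μ (v s) (v t) = -μ (v t) (v s))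
    (Ω : Set ((Fin (m + 1)) → ℝ)) (hΩ : IsOpen Ω)
    (φs : Fin (m + 1) → ((Fin (m + 1)) → ℝ) → ℝ)
    (hC1 : ∀ t, ContDiffOn ℝ 1 (φs t) Ω)
    (hsym : ∀ s t : Fin (m + 1), s ≠ 0 → t ≠ 0 → ∀ p ∈ Ω,
      fderiv ℝ (φs t) p (Pi.single s 1) = fderiv ℝ (φs s) p (Pi.single t 1))
    (a : A) (p : (Fin (m + 1)) → ℝ) (hp : p ∈ Ω) :
    ∑ s, μ (v s) (fderiv ℝ (fun q => μ (∑ t, φs t q • v t) a) p (Pi.single s 1)) =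
      μ (∑ s, μ (v s) (fderiv ℝ (fun q => ∑ t, φs t q • v t) p (Pi.single s 1))) a :=
  cauchyRiemann_factor_right_mul_general μ e he hLA m v hv0 Ω hΩ φs hC1 hsym a p hp
end

section
/- With notation as above, if φ = ∑_{s=0}^m φₛvₛ : Ω → M is C¹ and satisfies the symmetry conditions ∂ₛφ_t = ∂_tφₛ for all 1 ≤ s ≤ m and 1 ≤ t ≤ m−1, then for every a ∈ A, ∑_{s=0}^m [vₛ, ∂̄_B φₛ, a] = 0, where ∂̄_B φₛ = ∑_{t=0}^m v_t ∂_tφₛ and [·,·,·] is the associator. -/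
/-- Let `A` be a real alternative algebra (multiplication `μ`, unity `e`) with hypercomplex
basis `v 0 = e, v 1, …, v m` of a subspace `M`.  If `φ = ∑ s, φs s • v s : Ω → M` is `C¹`
and satisfies `∂ₛ φ_t = ∂_t φₛ` for all `1 ≤ s ≤ m`, `1 ≤ t ≤ m − 1`, then for every
`a ∈ A` the associator sum `∑_{s=0}^m [v s, ∂̄_B φₛ, a]` vanishes on `Ω`. -/
theorem associator_sum_vanishes {A : Type*} [NormedAddCommGroup A] [NormedSpace ℝ A]
    [FiniteDimensional ℝ A]
    (μ : A →L[ℝ] A →L[ℝ] A) (e : A)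
    (he : ∀ a : A, μ e a = a ∧ μ a e = a)
    (hLA : ∀ a b : A, μ (μ a a) b = μ a (μ a b))
    (hRA : ∀ a b : A, μ (μ a b) b = μ a (μ b b))
    (m : ℕ) (hm : 1 ≤ m) (v : Fin (m + 1) → A)
    (hv0 : v 0 = e)
    (hvsq : ∀ s, s ≠ 0 → μ (v s) (v s) = -e)
    (hvanti : ∀ s t, s ≠ 0 → t ≠ 0 → s ≠ t → μ (v s) (v t) = -μ (v t) (v s))
    (Ω : Set ((Fin (m + 1)) → ℝ)) (hΩ : IsOpen Ω)
    (φs : Fin (m + 1) → ((Fin (m + 1)) → ℝ) → ℝ)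
    (hC1 : ∀ t, ContDiffOn ℝ 1 (φs t) Ω)
    (hsym : ∀ s t : Fin (m + 1), s ≠ 0 → t ≠ 0 → (t : ℕ) < m → ∀ p ∈ Ω,
      fderiv ℝ (φs t) p (Pi.single s 1) = fderiv ℝ (φs s) p (Pi.single t 1))
    (a : A) (p : (Fin (m + 1)) → ℝ) (hp : p ∈ Ω) :
    ∑ s, (μ (μ (v s) (∑ t, fderiv ℝ (φs s) p (Pi.single t 1) • v t)) a -
          μ (v s) (μ (∑ t, fderiv ℝ (φs s) p (Pi.single t 1) • v t) a)) = 0 := by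
  set d : Fin (m + 1) → Fin (m + 1) → ℝ :=
    fun s t => fderiv ℝ (φs s) p (Pi.single t 1) with hd
  set g : Fin (m + 1) → Fin (m + 1) → A :=
    fun s t => μ (μ (v s) (v t)) a - μ (v s) (μ (v t) a) with hg
  -- antisymmetry of the associator in the first two slots (linearized left alternativity)
  have hanti : ∀ x y : A,
      (μ (μ x y) a - μ x (μ y a)) + (μ (μ y x) a - μ y (μ x a)) = 0 := by
    intro x y
    have h := hLA (x + y) a
    have hx := hLA x a
    have hy := hLA y a
    simp only [map_add, ContinuousLinearMap.add_apply] at h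
    linear_combination (norm := module) h - hx - hy
  -- diagonal vanishes
  have hdiag : ∀ s, g s s = 0 := fun s => sub_eq_zero.mpr (hLA (v s) a)
  have hg0 : ∀ s, g s 0 = 0 := by
    intro s
    simp [hg, hv0, (he (v s)).2, (he a).1]
  have h0g : ∀ t, g 0 t = 0 := by
    intro t
    simp [hg, hv0, (he (v t)).1, (he (μ (v t) a)).1]
  -- symmetry of d off the zero row/column
  have hdsym : ∀ s t, s ≠ 0 → t ≠ 0 → s ≠ t → d s t = d t s := by
    intro s t hs ht hst
    by_cases htm : (t : ℕ) < m
    · exact (hsym s t hs ht htm p hp).symm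
    · have hsm : (s : ℕ) < m := by
        have h1 := s.is_le
        have h2 := t.is_le
        have hne : (s : ℕ) ≠ (t : ℕ) := fun h => hst (Fin.ext h)
        omega
      exact hsym t s ht hs hsm p hp
  -- termwise antisymmetry of (s, t) ↦ d s t • g s t
  have key : ∀ s t, d s t • g s t = -(d t s • g t s) := by
    intro s t
    by_cases hs : s = 0
    · subst hs; rw [h0g, hg0]; simp
    by_cases ht : t = 0
    · subst ht; rw [h0g, hg0]; simp
    by_cases hst : s = t
    · subst hst; rw [hdiag]; simp
    · rw [hdsym s t hs ht hst]
      have hst' : g s t = -g t s := by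
        have h := hanti (v s) (v t)
        have h' : g s t + g t s = 0 := h
        exact eq_neg_of_add_eq_zero_left h'
      rw [hst', smul_neg]
  -- expand each summand of the goal
  have expand : ∀ s : Fin (m + 1),
      μ (μ (v s) (∑ t, d s t • v t)) a - μ (v s) (μ (∑ t, d s t • v t) a)
        = ∑ t, d s t • g s t := by
    intro s
    simp [hg, map_sum, map_smul, ContinuousLinearMap.sum_apply,
      ContinuousLinearMap.smul_apply, smul_sub, Finset.sum_sub_distrib]
  calc ∑ s, (μ (μ (v s) (∑ t, d s t • v t)) a - μ (v s) (μ (∑ t, d s t • v t) a))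
      = ∑ s, ∑ t, d s t • g s t := Finset.sum_congr rfl fun s _ => expand s
    _ = 0 := by
        have hS : (∑ s, ∑ t, d s t • g s t) = -(∑ s, ∑ t, d s t • g s t) := by
          nth_rewrite 2 [Finset.sum_comm]
          rw [← Finset.sum_neg_distrib]
          refine Finset.sum_congr rfl fun s _ => ?_
          rw [← Finset.sum_neg_distrib]
          exact Finset.sum_congr rfl fun t _ => key s t
        have h2 : (2 : ℝ) • (∑ s, ∑ t, d s t • g s t) = 0 := by
          rw [two_smul]; nth_rewrite 1 [hS]; simp
        have := smul_eq_zero.mp h2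
        simpa using this
end

section
/- The Cauchy kernel E(x) := (1/σ_m) x^c / |x|^{m+1}, defined on M \ {0} where M is a hypercomplex subspace of a real alternative *-algebra A, is both left and right monogenic: ∑_{s=0}^m vₛ (∂ₛE)(x) = 0 and ∑_{s=0}^m (∂ₛE)(x) vₛ = 0 for all x ≠ 0. Here σ_m is the surface area of the unit sphere in ℝ^{m+1}. -/
/-!
Write `r = |x|`, `n = m + 1` and `xᶜ = W x` for the linear conjugation map `W`. Then
`∂ₛ(r⁻ⁿ xᶜ) = r⁻ⁿ (W eₛ - n xₛ r⁻² xᶜ)`, so `∑ vₛ ∂ₛE = r⁻ⁿ (∑ vₛ (W eₛ) - n r⁻² x xᶜ)`.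
Every `vₛ (W eₛ)` equals `1`, and `x xᶜ = |x|²` because the anticommutation relations cancel the
mixed terms of `(∑_{s ≥ 1} xₛ vₛ)²`; hence the bracket is `n - n = 0`. The right-hand sum is the
same computation for the opposite product `(a, b) ↦ b a`, which satisfies the same relations,
and the constant `σ_m` merely rescales `E`.
-/

open Finset

theorem LinearMap.map_sum_smul_self_of_anticomm {ι R M N : Type*} [CommRing R] [AddCommGroup M]
    [Module R M] [AddCommGroup N] [Module R N] (β : M →ₗ[R] M →ₗ[R] N) (S : Finset ι)
    (c : ι → R) (w : ι → M)
    (hanti : ∀ s ∈ S, ∀ t ∈ S, s ≠ t → β (w s) (w t) = -β (w t) (w s)) :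
    β (∑ s ∈ S, c s • w s) (∑ s ∈ S, c s • w s) = ∑ s ∈ S, (c s ^ 2) • β (w s) (w s) := by
  classical
  have hexpand : β (∑ s ∈ S, c s • w s) (∑ s ∈ S, c s • w s) =
      ∑ st ∈ S ×ˢ S, (c st.1 * c st.2) • β (w st.1) (w st.2) := by
    simp only [map_sum, map_smul, LinearMap.sum_apply, LinearMap.smul_apply, sum_product,
      smul_smul, smul_sum]
    rw [sum_comm]
    simp only [mul_comm]
  have hoff : ∑ st ∈ S.offDiag, (c st.1 * c st.2) • β (w st.1) (w st.2) = 0 := by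
    refine sum_involution (fun st _ => st.swap) (fun st hst => ?_) (fun st hst _ => ?_)
      (fun st hst => mem_offDiag.2 ?_) (fun st _ => rfl)
    · obtain ⟨hs, ht, hst⟩ := mem_offDiag.1 hst
      rw [Prod.fst_swap, Prod.snd_swap, hanti _ hs _ ht hst, mul_comm, smul_neg, neg_add_cancel]
    · obtain ⟨-, -, hst⟩ := mem_offDiag.1 hst
      exact fun h => hst (congrArg Prod.snd h)
    · obtain ⟨hs, ht, hst⟩ := mem_offDiag.1 hst
      exact ⟨ht, hs, Ne.symm hst⟩
  rw [hexpand, ← diag_union_offDiag, sum_union (disjoint_diag_offDiag S), hoff, add_zero,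
    sum_diag]
  simp only [sq]

section Radial

variable {ι A : Type*} [Fintype ι] [NormedAddCommGroup A] [NormedSpace ℝ A]

theorem sum_sq_pos_of_ne_zero {p : ι → ℝ} (hp : p ≠ 0) : 0 < ∑ t, p t ^ 2 := by
  obtain ⟨t, ht⟩ := Function.ne_iff.mp hp
  exact sum_pos' (fun t _ => sq_nonneg _) ⟨t, mem_univ t, pow_two_pos_of_ne_zero ht⟩

theorem hasFDerivAt_sum_sq (p : ι → ℝ) :
    HasFDerivAt (fun q : ι → ℝ => ∑ s, q s ^ 2)
      (∑ s, (2 * p s) • (ContinuousLinearMap.proj s : (ι → ℝ) →L[ℝ] ℝ)) p :=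
  HasFDerivAt.fun_sum fun s _ => by
    have hsq : HasDerivAt (fun y : ℝ => y ^ 2) (2 * p s) (p s) := by
      simpa using hasDerivAt_pow 2 (p s)
    exact hsq.comp_hasFDerivAt p (hasFDerivAt_apply (𝕜 := ℝ) s p)

theorem hasDerivAt_inv_sqrt_pow {y : ℝ} (hy : 0 < y) (n : ℕ) :
    HasDerivAt (fun y => (√y ^ n)⁻¹) (-(n / (2 * y)) * (√y ^ n)⁻¹) y := by
  have hr : √y ≠ 0 := (Real.sqrt_pos.2 hy).ne'
  refine (((Real.hasDerivAt_sqrt hy.ne').pow n).inv (pow_ne_zero n hr)).congr_deriv ?_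
  simp only [Pi.pow_apply]
  have hy2 := Real.sq_sqrt hy.le
  generalize √y = r at hr hy2 ⊢
  subst hy2
  rcases n with _ | k
  · simp
  · rw [Nat.add_sub_cancel]
    field_simp
    ring

theorem fderiv_inv_sqrt_sum_sq_pow_smul_apply_single [DecidableEq ι]
    (W : (ι → ℝ) →L[ℝ] A) (n : ℕ) {p : ι → ℝ} (hp : p ≠ 0) (s : ι) :
    fderiv ℝ (fun q => (√(∑ t, q t ^ 2) ^ n)⁻¹ • W q) p (Pi.single s 1) =
      (√(∑ t, p t ^ 2) ^ n)⁻¹ • (W (Pi.single s 1) - (n * p s / ∑ t, p t ^ 2) • W p) := by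
  have hcoeff := (hasDerivAt_inv_sqrt_pow (sum_sq_pos_of_ne_zero hp) n).comp_hasFDerivAt p
    (hasFDerivAt_sum_sq p)
  have hE : HasFDerivAt (fun q => (√(∑ t, q t ^ 2) ^ n)⁻¹ • W q) _ p :=
    hcoeff.smul W.hasFDerivAt
  rw [hE.fderiv]
  simp [Pi.single_apply]
  module

end Radial

section Hypercomplex

variable {A : Type*} [NormedAddCommGroup A] [NormedSpace ℝ A] {m : ℕ} (e : A) (v : Fin (m + 1) → A)

def hypercomplexConj : (Fin (m + 1) → ℝ) →L[ℝ] A :=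
  (ContinuousLinearMap.proj 0).smulRight e -
    ∑ s ∈ univ \ {0}, (ContinuousLinearMap.proj s).smulRight (v s)

@[simp]
theorem hypercomplexConj_apply (q : Fin (m + 1) → ℝ) :
    hypercomplexConj e v q = q 0 • e - ∑ s ∈ univ \ {0}, q s • v s := by
  simp [hypercomplexConj]

theorem hypercomplexConj_single_zero : hypercomplexConj e v (Pi.single 0 1) = e := by
  simp +contextual [Pi.single_apply]

theorem hypercomplexConj_single_of_ne_zero {s : Fin (m + 1)} (hs : s ≠ 0) :
    hypercomplexConj e v (Pi.single s 1) = -v s := by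
  simp [Pi.single_apply, hs, sum_ite_eq']

/-- The Cauchy kernel without its normalising factor `1 / σ_m`. -/
noncomputable def cauchyKernel : (Fin (m + 1) → ℝ) → A :=
  fun q => (√(∑ t, q t ^ 2) ^ (m + 1))⁻¹ • hypercomplexConj e v q

variable {e v} (β : A →L[ℝ] A →L[ℝ] A)

theorem sum_apply_hypercomplexConj_single (he : β e e = e) (hv0 : v 0 = e)
    (hvsq : ∀ s, s ≠ 0 → β (v s) (v s) = -e) :
    ∑ s, β (v s) (hypercomplexConj e v (Pi.single s 1)) = (m + 1) • e := by
  have hterm : ∀ s, β (v s) (hypercomplexConj e v (Pi.single s 1)) = e := by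
    intro s
    rcases eq_or_ne s 0 with rfl | hs
    · rw [hypercomplexConj_single_zero, hv0, he]
    · rw [hypercomplexConj_single_of_ne_zero e v hs, map_neg, hvsq s hs, neg_neg]
  rw [sum_congr rfl fun s _ => hterm s, sum_const, card_univ, Fintype.card_fin]

theorem apply_sum_smul_hypercomplexConj (he : ∀ a, β e a = a ∧ β a e = a) (hv0 : v 0 = e)
    (hvsq : ∀ s, s ≠ 0 → β (v s) (v s) = -e)
    (hvanti : ∀ s t, s ≠ 0 → t ≠ 0 → s ≠ t → β (v s) (v t) = -β (v t) (v s))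
    (p : Fin (m + 1) → ℝ) :
    β (∑ s, p s • v s) (hypercomplexConj e v p) = (∑ s, p s ^ 2) • e := by
  rw [sum_eq_add_sum_sdiff_singleton_of_mem (mem_univ 0), hv0, hypercomplexConj_apply,
    sum_eq_add_sum_sdiff_singleton_of_mem (mem_univ 0) (fun s => p s ^ 2)]
  set z := ∑ s ∈ univ \ {0}, p s • v s
  have hzz : β z z = -(∑ s ∈ univ \ {0}, p s ^ 2) • e := by
    have h := β.toLinearMap₁₂.map_sum_smul_self_of_anticomm (univ \ {0}) p v
      fun s hs t ht hst => hvanti s t (by simpa using hs) (by simpa using ht) hst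
    simp only [ContinuousLinearMap.toLinearMap₁₂_apply_apply_apply] at h
    rw [h, neg_smul, ← smul_neg, sum_smul]
    refine sum_congr rfl fun s hs => ?_
    rw [hvsq s (by simpa using hs)]
  have hunit_left (a : A) : β e a = a := (he a).1
  have hunit_right (a : A) : β a e = a := (he a).2
  simp only [map_add, map_sub, map_smul, add_apply, smul_apply, hunit_left,
    hunit_right, hzz]
  module

theorem sum_apply_fderiv_cauchyKernel_single_eq_zero (he : ∀ a, β e a = a ∧ β a e = a)
    (hv0 : v 0 = e) (hvsq : ∀ s, s ≠ 0 → β (v s) (v s) = -e)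
    (hvanti : ∀ s t, s ≠ 0 → t ≠ 0 → s ≠ t → β (v s) (v t) = -β (v t) (v s))
    {p : Fin (m + 1) → ℝ} (hp : p ≠ 0) :
    ∑ s, β (v s) (fderiv ℝ (cauchyKernel e v) p (Pi.single s 1)) = 0 := by
  have hQ : ∑ t, p t ^ 2 ≠ 0 := (sum_sq_pos_of_ne_zero hp).ne'
  have hradial : ∑ s, ((m + 1 : ℕ) * p s / ∑ t, p t ^ 2) • β (v s) (hypercomplexConj e v p) =
      (m + 1) • e := by
    calc _ = ((m + 1 : ℕ) / ∑ t, p t ^ 2 : ℝ) • β (∑ s, p s • v s) (hypercomplexConj e v p) := by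
          simp only [map_sum, map_smul, _root_.sum_apply, smul_apply, smul_sum, smul_smul]
          congr! 2
          ring
      _ = (m + 1) • e := by
          rw [apply_sum_smul_hypercomplexConj β he hv0 hvsq hvanti, smul_smul,
            div_mul_cancel₀ _ hQ, Nat.cast_smul_eq_nsmul]
  unfold cauchyKernel
  simp only [fderiv_inv_sqrt_sum_sq_pow_smul_apply_single _ _ hp, map_smul, map_sub,
    sum_sub_distrib, ← smul_sum]
  rw [sum_apply_hypercomplexConj_single β (he e).1 hv0 hvsq, hradial, sub_self, smul_zero]

end Hypercomplex

theorem cauchy_kernel_monogenic_general {A : Type*} [NormedAddCommGroup A] [NormedSpace ℝ A]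
    (μ : A →L[ℝ] A →L[ℝ] A) (e : A)
    (he : ∀ a : A, μ e a = a ∧ μ a e = a)
    (m : ℕ) (v : Fin (m + 1) → A)
    (hv0 : v 0 = e)
    (hvsq : ∀ s, s ≠ 0 → μ (v s) (v s) = -e)
    (hvanti : ∀ s t, s ≠ 0 → t ≠ 0 → s ≠ t → μ (v s) (v t) = -μ (v t) (v s))
    (σ : ℝ)
    (E : ((Fin (m + 1)) → ℝ) → A)
    (hE : E = fun q => (σ * Real.sqrt (∑ s, q s ^ 2) ^ (m + 1))⁻¹ •
      (q 0 • e - ∑ s ∈ Finset.univ \ {0}, q s • v s))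
    (p : (Fin (m + 1)) → ℝ) (hp : p ≠ 0) :
    ∑ s, μ (v s) (fderiv ℝ E p (Pi.single s 1)) = 0 ∧
    ∑ s, μ (fderiv ℝ E p (Pi.single s 1)) (v s) = 0 := by
  have hE' : E = σ⁻¹ • cauchyKernel e v := by
    rw [hE]
    funext q
    rw [Pi.smul_apply, cauchyKernel, hypercomplexConj_apply, mul_inv, mul_smul, smul_comm]
  simp only [hE', fderiv_const_smul_field, Pi.smul_apply, smul_apply, map_smul, ← smul_sum]
  refine ⟨?_, ?_⟩
  · rw [sum_apply_fderiv_cauchyKernel_single_eq_zero μ he hv0 hvsq hvanti hp, smul_zero]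
  · have hright := sum_apply_fderiv_cauchyKernel_single_eq_zero μ.flip (fun a => (he a).symm)
      hv0 hvsq (fun s t hs ht hst => hvanti t s ht hs hst.symm) hp
    simp only [ContinuousLinearMap.flip_apply] at hright
    rw [hright, smul_zero]

/-- The Cauchy kernel `E(x) = (1/σ_m) xᶜ / |x|^{m+1}` on `M \ {0}`, where `M` is a
hypercomplex subspace of a real alternative `∗`-algebra `A` (multiplication `μ`, unity `e`,
hypercomplex basis `v 0 = e, v 1, …, v m`), is both left and right monogenic:
`∑ₛ vₛ (∂ₛ E)(x) = 0` and `∑ₛ (∂ₛ E)(x) vₛ = 0` for `x ≠ 0`.  Here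
`σ_m = 2 Γ(1/2)^{m+1} / Γ((m+1)/2)` is the surface area of the unit sphere in `ℝ^{m+1}`. -/
theorem cauchy_kernel_monogenic {A : Type*} [NormedAddCommGroup A] [NormedSpace ℝ A]
    [FiniteDimensional ℝ A]
    (μ : A →L[ℝ] A →L[ℝ] A) (e : A)
    (he : ∀ a : A, μ e a = a ∧ μ a e = a)
    (hLA : ∀ a b : A, μ (μ a a) b = μ a (μ a b))
    (hRA : ∀ a b : A, μ (μ a b) b = μ a (μ b b))
    (m : ℕ) (hm : 1 ≤ m) (v : Fin (m + 1) → A)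
    (hv0 : v 0 = e)
    (hvsq : ∀ s, s ≠ 0 → μ (v s) (v s) = -e)
    (hvanti : ∀ s t, s ≠ 0 → t ≠ 0 → s ≠ t → μ (v s) (v t) = -μ (v t) (v s))
    (σ : ℝ) (hσ : σ = 2 * Real.Gamma (1 / 2) ^ (m + 1) / Real.Gamma ((m + 1) / 2))
    (E : ((Fin (m + 1)) → ℝ) → A)
    (hE : E = fun q => (σ * Real.sqrt (∑ s, q s ^ 2) ^ (m + 1))⁻¹ •
      (q 0 • e - ∑ s ∈ Finset.univ \ {0}, q s • v s))
    (p : (Fin (m + 1)) → ℝ) (hp : p ≠ 0) :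
    ∑ s, μ (v s) (fderiv ℝ E p (Pi.single s 1)) = 0 ∧
    ∑ s, μ (fderiv ℝ E p (Pi.single s 1)) (v s) = 0 :=
  cauchy_kernel_monogenic_general μ e he m v hv0 hvsq hvanti σ E hE p hp
end

section
/- For each multi-index k = (k₁,…,k_m) ∈ ℕ^m, the Fueter polynomial P_k(x) := (1/k!) ∑_σ z_{i₁} z_{i₂} ⋯ z_{i_k} (sum over all distinguishable permutations of the multiset with kⱼ copies of j, k = |k|, product taken right-to-left, well defined independent of bracketing by the symmetrized-associativity lemma) is both left and right monogenic on M: ∂̄_B P_k = 0 and P_k ∂̄_B = 0. -/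
/-!
Write `S w` for the sum of the right-nested products `z_{u₁} (z_{u₂} (⋯ z_{u_k}))` over the
distinct rearrangements `u` of a list of indices `w`; `P_k` is a scalar multiple of `S w`. Grouping
by the first factor gives `S w = ∑_{b ∈ w} z_b S (w - b)`, and differentiating this recursion gives
`∂_s S w = |w| S (w - s)` for `s ≠ 0`. Apply `∂̄_B` to the recursion and induct on `|w|`. The terms
in which the derivative falls on the leading factor `z_b` cancel on the left, as `∂̄_B z_b = 0`,
and on the right they leave `∑_b [S (w - b), v_b]`, which vanishes by a similar induction. The
remaining terms are double sums over `b ∈ w`, `c ∈ w - b` of expressions antisymmetric in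
`(b, c)`: `v_c (v_b S) - v_b (v_c S)` on the left, and on the right the associator
`(v_b, S, v_c)`, which is alternating because the algebra is alternative.
-/

namespace Fueter

open Finset

section Combinatorics

variable {α M : Type*} [DecidableEq α]

theorem sum_permutations_toFinset_eq_sum_erase [AddCommMonoid M] {w : List α} (hw : w ≠ [])
    (f : List α → M) :
    ∑ u ∈ w.permutations.toFinset, f u =
      ∑ b ∈ w.toFinset, ∑ u ∈ (w.erase b).permutations.toFinset, f (b :: u) := by
  have hperms : w.permutations.toFinset =
      w.toFinset.biUnion fun b => (w.erase b).permutations.toFinset.image (b :: ·) := by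
    ext u
    simp only [List.mem_toFinset, List.mem_permutations, mem_biUnion, mem_image]
    constructor
    · intro hu
      obtain ⟨b, t, rfl⟩ :=
        List.exists_cons_of_ne_nil (l := u) fun h => hw (h ▸ hu).symm.eq_nil
      have hb : b ∈ w := hu.subset List.mem_cons_self
      exact ⟨b, hb, t, (hu.trans (List.perm_cons_erase hb)).cons_inv, rfl⟩
    · rintro ⟨b, hb, t, ht, rfl⟩
      exact (ht.cons b).trans (List.perm_cons_erase hb).symm
  rw [hperms, sum_biUnion]
  · refine sum_congr rfl fun b _ => sum_image fun _ _ _ _ h => List.cons_injective h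
  · intro b _ c _ hbc
    simp only [Function.onFun, disjoint_left, mem_image]
    rintro _ ⟨_, _, rfl⟩ ⟨_, _, h⟩
    exact hbc (List.cons.inj h).1.symm

theorem mem_erase_comm {w : List α} {b c : α} (hb : b ∈ w) (hc : c ∈ w) :
    c ∈ w.erase b ↔ b ∈ w.erase c := by
  rcases eq_or_ne b c with rfl | hbc
  · rfl
  · rw [List.mem_erase_of_ne hbc, List.mem_erase_of_ne hbc.symm]
    exact iff_of_true hc hb

theorem sum_toFinset_erase_eq_sum_ite [AddCommMonoid M] (w : List α) (b : α) (g : α → M) :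
    ∑ c ∈ (w.erase b).toFinset, g c =
      ∑ c ∈ w.toFinset, if c ∈ w.erase b then g c else 0 := by
  rw [← sum_filter]
  congr 1
  ext c
  simp only [List.mem_toFinset, mem_filter]
  exact ⟨fun h => ⟨List.mem_of_mem_erase h, h⟩, And.right⟩

theorem sum_sum_erase_comm [AddCommMonoid M] (w : List α) (f : α → α → List α → M) :
    ∑ b ∈ w.toFinset, ∑ c ∈ (w.erase b).toFinset, f b c ((w.erase b).erase c) =
      ∑ b ∈ w.toFinset, ∑ c ∈ (w.erase b).toFinset, f c b ((w.erase b).erase c) := by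
  simp_rw [sum_toFinset_erase_eq_sum_ite w]
  rw [sum_comm]
  refine sum_congr rfl fun b hb => sum_congr rfl fun c hc => ?_
  rw [List.mem_toFinset] at hb hc
  simp only [mem_erase_comm hc hb, List.erase_comm c b]

theorem sum_sum_erase_eq_zero [AddCommMonoid M] (w : List α) {f : α → α → List α → M}
    (hf : ∀ b c u, f b c u + f c b u = 0) (hdiag : ∀ b u, f b b u = 0) :
    ∑ b ∈ w.toFinset, ∑ c ∈ (w.erase b).toFinset, f b c ((w.erase b).erase c) = 0 := by
  simp_rw [sum_toFinset_erase_eq_sum_ite w, ← sum_product']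
  refine sum_involution (fun x _ => x.swap) (fun ⟨b, c⟩ hbc => ?_)
    (fun ⟨b, c⟩ _ hne h => ?_)
    (fun x hx => mem_product.2 ⟨(mem_product.1 hx).2, (mem_product.1 hx).1⟩) fun _ _ => rfl
  · simp only [mem_product, List.mem_toFinset] at hbc
    simp only [Prod.swap, mem_erase_comm hbc.2 hbc.1, List.erase_comm c b]
    split_ifs
    · exact hf b c _
    · exact add_zero 0
  · obtain rfl : b = c := (Prod.ext_iff.1 h).2
    exact hne (by simp [hdiag])

theorem length_erase_lt {w : List α} {b : α} (hb : b ∈ w) : (w.erase b).length < w.length := by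
  have := List.length_erase_add_one hb
  omega

end Combinatorics

variable {A : Type*} [NormedAddCommGroup A] [NormedSpace ℝ A] (μ : A →L[ℝ] A →L[ℝ] A)

section Associator

noncomputable def associator (a b c : A) : A := μ (μ a b) c - μ a (μ b c)

theorem associator_swap_right (hRA : ∀ a b : A, μ (μ a b) b = μ a (μ b b)) (a b c : A) :
    associator μ a b c = -associator μ a c b := by
  have hsq : ∀ x, associator μ a x x = 0 := fun x => sub_eq_zero.2 (hRA a x)
  have hexp : associator μ a (b + c) (b + c) =
      associator μ a b b + associator μ a b c + associator μ a c b + associator μ a c c := by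
    simp only [associator, map_add, add_apply]
    abel
  rw [hsq, hsq, hsq, zero_add, add_zero, eq_comm, add_eq_zero_iff_eq_neg] at hexp
  exact hexp

theorem associator_swap_left (hLA : ∀ a b : A, μ (μ a a) b = μ a (μ a b)) (a b c : A) :
    associator μ a b c = -associator μ b a c := by
  have hsq : ∀ x, associator μ x x c = 0 := fun x => sub_eq_zero.2 (hLA x c)
  have hexp : associator μ (a + b) (a + b) c =
      associator μ a a c + associator μ a b c + associator μ b a c + associator μ b b c := by
    simp only [associator, map_add, add_apply]
    abel
  rw [hsq, hsq, hsq, zero_add, add_zero, eq_comm, add_eq_zero_iff_eq_neg] at hexp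
  exact hexp

theorem associator_swap_outer (hLA : ∀ a b : A, μ (μ a a) b = μ a (μ a b))
    (hRA : ∀ a b : A, μ (μ a b) b = μ a (μ b b)) (a b c : A) :
    associator μ a b c = -associator μ c b a := by
  rw [associator_swap_left μ hLA, associator_swap_right μ hRA, associator_swap_left μ hLA,
    neg_neg]

theorem associator_self_outer (hLA : ∀ a b : A, μ (μ a a) b = μ a (μ a b))
    (hRA : ∀ a b : A, μ (μ a b) b = μ a (μ b b)) (a b : A) : associator μ a b a = 0 := by
  rw [associator_swap_right μ hRA, neg_eq_zero]
  exact sub_eq_zero.2 (hLA a b)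

end Associator

section SymmetrizedProduct

variable {α : Type*} [DecidableEq α] (e : A)

noncomputable def symProd (x : α → A) (w : List α) : A :=
  ∑ u ∈ w.permutations.toFinset, (u.map x).foldr (fun a b => μ a b) e

@[simp]
theorem symProd_nil (x : α → A) : symProd μ e x [] = e := by
  simp [symProd]

theorem symProd_eq_sum_erase (x : α → A) {w : List α} (hw : w ≠ []) :
    symProd μ e x w = ∑ b ∈ w.toFinset, μ (x b) (symProd μ e x (w.erase b)) := by
  simp only [symProd, sum_permutations_toFinset_eq_sum_erase hw, map_sum]
  rfl

variable {E : Type*} [NormedAddCommGroup E] [NormedSpace ℝ E] (z : α → E →L[ℝ] A)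

theorem differentiable_symProd (w : List α) :
    Differentiable ℝ fun q => symProd μ e (fun b => z b q) w := by
  have hprod (u : List α) :
      Differentiable ℝ fun q => (u.map fun b => z b q).foldr (fun a b => μ a b) e := by
    induction u with
    | nil => exact differentiable_const e
    | cons b u ih => exact (μ.differentiable.comp (z b).differentiable).clm_apply ih
  exact Differentiable.fun_sum fun u _ => hprod u

theorem fderiv_symProd_apply {w : List α} (hw : w ≠ []) (p h : E) :
    fderiv ℝ (fun q => symProd μ e (fun b => z b q) w) p h =
      ∑ b ∈ w.toFinset, (μ (z b h) (symProd μ e (fun c => z c p) (w.erase b)) +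
        μ (z b p) (fderiv ℝ (fun q => symProd μ e (fun c => z c q) (w.erase b)) p h)) := by
  have hrec : (fun q => symProd μ e (fun b => z b q) w) =
      fun q => ∑ b ∈ w.toFinset, μ (z b q) (symProd μ e (fun c => z c q) (w.erase b)) :=
    funext fun q => symProd_eq_sum_erase μ e _ hw
  have hderiv := HasFDerivAt.fun_sum (u := w.toFinset) fun b _ =>
    ((μ.hasFDerivAt.comp p (z b).hasFDerivAt)).clm_apply
      ((differentiable_symProd μ e z (w.erase b)) p).hasFDerivAt
  have hfderiv := hderiv.fderiv
  simp only [Function.comp_apply] at hfderiv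
  rw [hrec, hfderiv]
  simp [add_comm]

end SymmetrizedProduct

section FueterPolynomials

variable {m : ℕ} (e : A) (v : Fin (m + 1) → A)

noncomputable def fueterVar (ℓ : Fin (m + 1)) : (Fin (m + 1) → ℝ) →L[ℝ] A :=
  (ContinuousLinearMap.proj ℓ).smulRight e - (ContinuousLinearMap.proj 0).smulRight (v ℓ)

@[simp]
theorem fueterVar_apply (ℓ : Fin (m + 1)) (q : Fin (m + 1) → ℝ) :
    fueterVar e v ℓ q = q ℓ • e - q 0 • v ℓ := by
  simp [fueterVar]

theorem fueterVar_single_of_ne_zero {s : Fin (m + 1)} (hs : s ≠ 0) (ℓ : Fin (m + 1)) :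
    fueterVar e v ℓ (Pi.single s 1) = if ℓ = s then e else 0 := by
  simp [Pi.single_apply, hs.symm]

theorem fueterVar_mul (he_left : ∀ a, μ e a = a) (ℓ : Fin (m + 1)) (q : Fin (m + 1) → ℝ)
    (a : A) : μ (fueterVar e v ℓ q) a = q ℓ • a - q 0 • μ (v ℓ) a := by
  simp [he_left]

/-- For `w` listing each index `j` with multiplicity `kⱼ`, this is `k! P_k`. -/
noncomputable def fueterSym (w : List (Fin (m + 1))) (q : Fin (m + 1) → ℝ) : A :=
  symProd μ e (fun ℓ => fueterVar e v ℓ q) w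

noncomputable def dbar (f : (Fin (m + 1) → ℝ) → A) (p : Fin (m + 1) → ℝ) : A :=
  ∑ s, μ (v s) (fderiv ℝ f p (Pi.single s 1))

noncomputable def dbarRight (f : (Fin (m + 1) → ℝ) → A) (p : Fin (m + 1) → ℝ) : A :=
  ∑ s, μ (fderiv ℝ f p (Pi.single s 1)) (v s)

variable (p : Fin (m + 1) → ℝ)

theorem dbar_const_smul {f : (Fin (m + 1) → ℝ) → A} (hf : DifferentiableAt ℝ f p)
    (c : ℝ) :
    dbar μ v (c • f) p = c • dbar μ v f p := by
  simp [dbar, fderiv_const_smul hf, smul_sum]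

theorem dbarRight_const_smul {f : (Fin (m + 1) → ℝ) → A} (hf : DifferentiableAt ℝ f p)
    (c : ℝ) :
    dbarRight μ v (c • f) p = c • dbarRight μ v f p := by
  simp [dbarRight, fderiv_const_smul hf, smul_sum]

theorem fderiv_fueterSym_apply {w : List (Fin (m + 1))} (hw : w ≠ []) (h : Fin (m + 1) → ℝ) :
    fderiv ℝ (fueterSym μ e v w) p h =
      ∑ b ∈ w.toFinset, (μ (fueterVar e v b h) (fueterSym μ e v (w.erase b) p) +
        μ (fueterVar e v b p) (fderiv ℝ (fueterSym μ e v (w.erase b)) p h)) :=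
  fderiv_symProd_apply μ e (fueterVar e v) hw p h

theorem fderiv_fueterSym_nil : fderiv ℝ (fueterSym μ e v []) p = 0 := by
  change fderiv ℝ (fun q => symProd μ e (fun ℓ => fueterVar e v ℓ q) []) p = 0
  simp

theorem fderiv_fueterSym_single_of_not_mem {s : Fin (m + 1)} (hs : s ≠ 0)
    {w : List (Fin (m + 1))} (hsw : s ∉ w) :
    fderiv ℝ (fueterSym μ e v w) p (Pi.single s 1) = 0 := by
  rcases eq_or_ne w [] with rfl | hw
  · rw [fderiv_fueterSym_nil, zero_apply]
  rw [fderiv_fueterSym_apply μ e v p hw]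
  refine sum_eq_zero fun b hb => ?_
  have hbs : b ≠ s := ne_of_mem_of_not_mem (List.mem_toFinset.1 hb) hsw
  rw [fueterVar_single_of_ne_zero e v hs, if_neg hbs, map_zero, zero_apply, zero_add,
    fderiv_fueterSym_single_of_not_mem hs (fun h => hsw (List.mem_of_mem_erase h)), map_zero]
termination_by w.length
decreasing_by exact length_erase_lt (List.mem_toFinset.1 hb)

theorem fderiv_fueterSym_single_of_mem (he_left : ∀ a, μ e a = a) {s : Fin (m + 1)}
    (hs : s ≠ 0) {w : List (Fin (m + 1))} (hsw : s ∈ w) :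
    fderiv ℝ (fueterSym μ e v w) p (Pi.single s 1) =
      w.length • fueterSym μ e v (w.erase s) p := by
  rw [fderiv_fueterSym_apply μ e v p (List.ne_nil_of_mem hsw), sum_add_distrib]
  have hleading : ∑ b ∈ w.toFinset,
      μ (fueterVar e v b (Pi.single s 1)) (fueterSym μ e v (w.erase b) p) =
        fueterSym μ e v (w.erase s) p := by
    rw [sum_eq_single_of_mem s (List.mem_toFinset.2 hsw) fun b _ hbs => by
        rw [fueterVar_single_of_ne_zero e v hs, if_neg hbs, map_zero, zero_apply],
      fueterVar_single_of_ne_zero e v hs, if_pos rfl, he_left]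
  have hrest : ∑ b ∈ w.toFinset,
      μ (fueterVar e v b p) (fderiv ℝ (fueterSym μ e v (w.erase b)) p (Pi.single s 1)) =
        (w.erase s).length • fueterSym μ e v (w.erase s) p := by
    calc _ = ∑ b ∈ w.toFinset, if b ∈ w.erase s then
            (w.erase s).length • μ (fueterVar e v b p) (fueterSym μ e v ((w.erase s).erase b) p)
            else 0 := by
          refine sum_congr rfl fun b hb => ?_
          have hb := List.mem_toFinset.1 hb
          split_ifs with hbs
          · have hlen : (w.erase b).length = (w.erase s).length := by
              rw [List.length_erase_of_mem hb, List.length_erase_of_mem hsw]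
            rw [fderiv_fueterSym_single_of_mem he_left hs ((mem_erase_comm hb hsw).2 hbs), hlen,
              List.erase_comm, map_nsmul]
          · rw [fderiv_fueterSym_single_of_not_mem μ e v p hs
              fun h => hbs ((mem_erase_comm hb hsw).1 h), map_zero]
      _ = (w.erase s).length • ∑ b ∈ (w.erase s).toFinset,
            μ (fueterVar e v b p) (fueterSym μ e v ((w.erase s).erase b) p) := by
          simp only [sum_toFinset_erase_eq_sum_ite w s, smul_sum, smul_ite, smul_zero]
      _ = _ := by
          rcases eq_or_ne (w.erase s) [] with h | h
          · simp [h]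
          · rw [fueterSym, symProd_eq_sum_erase μ e _ h]
            rfl
  rw [hleading, hrest, ← succ_nsmul', List.length_erase_add_one hsw]
termination_by w.length
decreasing_by exact length_erase_lt hb

theorem sum_apply_fderiv_fueterSym_single (he_left : ∀ a, μ e a = a)
    (F : Fin (m + 1) → A →L[ℝ] A) (hF : F 0 = 0) (w : List (Fin (m + 1))) :
    ∑ s, F s (fderiv ℝ (fueterSym μ e v w) p (Pi.single s 1)) =
      w.length • ∑ s ∈ w.toFinset, F s (fueterSym μ e v (w.erase s) p) := by
  rw [smul_sum, ← sum_subset (subset_univ w.toFinset) fun s _ hs => ?_]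
  · refine sum_congr rfl fun s hs => ?_
    rcases eq_or_ne s 0 with rfl | hs0
    · simp [hF]
    · rw [fderiv_fueterSym_single_of_mem μ e v p he_left hs0 (List.mem_toFinset.1 hs), map_nsmul]
  · rcases eq_or_ne s 0 with rfl | hs0
    · simp [hF]
    · rw [fderiv_fueterSym_single_of_not_mem μ e v p hs0 (mt List.mem_toFinset.2 hs), map_zero]

theorem sum_v_mul_fueterVar_single_mul (he_left : ∀ a, μ e a = a) (hv0 : v 0 = e)
    (b : Fin (m + 1)) (a : A) :
    ∑ s, μ (v s) (μ (fueterVar e v b (Pi.single s 1)) a) = 0 := by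
  simp only [fueterVar_mul μ e v he_left, map_sub, map_smul, sum_sub_distrib]
  simp [Pi.single_apply, hv0, he_left]

theorem sum_fueterVar_single_mul_mul_v (he_left : ∀ a, μ e a = a) (he_right : ∀ a, μ a e = a)
    (hv0 : v 0 = e) (b : Fin (m + 1)) (a : A) :
    ∑ s, μ (μ (fueterVar e v b (Pi.single s 1)) a) (v s) = μ a (v b) - μ (v b) a := by
  simp only [fueterVar_mul μ e v he_left, map_sub, map_smul, sub_apply, smul_apply,
    sum_sub_distrib]
  simp [Pi.single_apply, hv0, he_right]

theorem sum_v_mul_fueterVar_mul_fderiv_fueterSym (he_left : ∀ a, μ e a = a) (hv0 : v 0 = e)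
    {w : List (Fin (m + 1))} (hw : dbar μ v (fueterSym μ e v w) p = 0) (b : Fin (m + 1)) :
    ∑ s, μ (v s) (μ (fueterVar e v b p) (fderiv ℝ (fueterSym μ e v w) p (Pi.single s 1))) =
      -(p 0 • w.length • ∑ c ∈ w.toFinset,
        (μ (v c) (μ (v b) (fueterSym μ e v (w.erase c) p)) -
          μ (v b) (μ (v c) (fueterSym μ e v (w.erase c) p)))) := by
  simp only [dbar] at hw
  have hcomm : ∑ s, μ (v s) (μ (v b) (fderiv ℝ (fueterSym μ e v w) p (Pi.single s 1))) =
      w.length • ∑ c ∈ w.toFinset,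
        (μ (v c) (μ (v b) (fueterSym μ e v (w.erase c) p)) -
          μ (v b) (μ (v c) (fueterSym μ e v (w.erase c) p))) := by
    have h := sum_apply_fderiv_fueterSym_single μ e v p he_left
      (fun s => (μ (v s)).comp (μ (v b)) - (μ (v b)).comp (μ (v s)))
      (by ext a; simp [hv0, he_left]) w
    simp only [sub_apply, ContinuousLinearMap.comp_apply, sum_sub_distrib, ← map_sum, hw,
      map_zero, sub_zero] at h
    rw [h, sum_sub_distrib, map_sum]
  simp only [fueterVar_mul μ e v he_left, map_sub, map_smul, sum_sub_distrib, ← smul_sum, hw,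
    hcomm, smul_zero, zero_sub]

theorem dbar_fueterSym (he_left : ∀ a, μ e a = a) (hv0 : v 0 = e) (w : List (Fin (m + 1))) :
    dbar μ v (fueterSym μ e v w) p = 0 := by
  rcases eq_or_ne w [] with rfl | hw
  · simp [dbar, fderiv_fueterSym_nil]
  calc dbar μ v (fueterSym μ e v w) p
      = ∑ b ∈ w.toFinset,
          (∑ s, μ (v s) (μ (fueterVar e v b (Pi.single s 1)) (fueterSym μ e v (w.erase b) p)) +
            ∑ s, μ (v s) (μ (fueterVar e v b p)
              (fderiv ℝ (fueterSym μ e v (w.erase b)) p (Pi.single s 1)))) := by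
        simp only [dbar, fderiv_fueterSym_apply μ e v p hw, map_sum, map_add]
        rw [sum_comm]
        exact sum_congr rfl fun b _ => sum_add_distrib
    _ = ∑ b ∈ w.toFinset, -(p 0 • (w.length - 1) • ∑ c ∈ (w.erase b).toFinset,
          (μ (v c) (μ (v b) (fueterSym μ e v ((w.erase b).erase c) p)) -
            μ (v b) (μ (v c) (fueterSym μ e v ((w.erase b).erase c) p)))) := by
        refine sum_congr rfl fun b hb => ?_
        rw [sum_v_mul_fueterVar_single_mul μ e v he_left hv0, zero_add,
          sum_v_mul_fueterVar_mul_fderiv_fueterSym μ e v p he_left hv0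
            (dbar_fueterSym he_left hv0 (w.erase b)),
          List.length_erase_of_mem (List.mem_toFinset.1 hb)]
    _ = 0 := by
        rw [sum_neg_distrib, ← smul_sum, ← smul_sum, sum_sum_erase_eq_zero w (f := fun b c u =>
            μ (v c) (μ (v b) (fueterSym μ e v u p)) - μ (v b) (μ (v c) (fueterSym μ e v u p)))
          (fun _ _ _ => by abel) fun _ _ => sub_self _]
        simp
termination_by w.length
decreasing_by exact length_erase_lt (List.mem_toFinset.1 hb)

theorem commutator_fueterSym_eq_sum (he_left : ∀ a, μ e a = a) (he_right : ∀ a, μ a e = a)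
    (b : Fin (m + 1)) (w : List (Fin (m + 1))) :
    μ (fueterSym μ e v w p) (v b) - μ (v b) (fueterSym μ e v w p) =
      ∑ c ∈ w.toFinset,
        (p c • (μ (fueterSym μ e v (w.erase c) p) (v b) -
            μ (v b) (fueterSym μ e v (w.erase c) p)) -
          p 0 • (associator μ (v c) (fueterSym μ e v (w.erase c) p) (v b) +
            (μ (v c) (μ (fueterSym μ e v (w.erase c) p) (v b)) -
              μ (v b) (μ (v c) (fueterSym μ e v (w.erase c) p))))) := by
  rcases eq_or_ne w [] with rfl | hw
  · simp [fueterSym, he_left, he_right]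
  rw [fueterSym, symProd_eq_sum_erase μ e _ hw, map_sum, _root_.sum_apply, map_sum,
    ← sum_sub_distrib]
  refine sum_congr rfl fun c _ => ?_
  rw [fueterVar_mul μ e v he_left]
  simp only [fueterSym, associator, map_sub, map_smul, sub_apply, smul_apply]
  module

theorem sum_commutator_fueterSym_erase (he_left : ∀ a, μ e a = a) (he_right : ∀ a, μ a e = a)
    (hLA : ∀ a b : A, μ (μ a a) b = μ a (μ a b))
    (hRA : ∀ a b : A, μ (μ a b) b = μ a (μ b b))
    (w : List (Fin (m + 1))) :
    ∑ b ∈ w.toFinset,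
      (μ (fueterSym μ e v (w.erase b) p) (v b) -
        μ (v b) (fueterSym μ e v (w.erase b) p)) = 0 := by
  have ih : ∀ b ∈ w.toFinset, ∑ c ∈ (w.erase b).toFinset,
      (μ (fueterSym μ e v ((w.erase b).erase c) p) (v c) -
        μ (v c) (fueterSym μ e v ((w.erase b).erase c) p)) = 0 := fun b _ =>
    sum_commutator_fueterSym_erase he_left he_right hLA hRA (w.erase b)
  have hcoeff : ∑ b ∈ w.toFinset, ∑ c ∈ (w.erase b).toFinset,
      p c • (μ (fueterSym μ e v ((w.erase b).erase c) p) (v b) -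
        μ (v b) (fueterSym μ e v ((w.erase b).erase c) p)) = 0 := by
    rw [sum_sum_erase_comm w fun b c u =>
      p c • (μ (fueterSym μ e v u p) (v b) - μ (v b) (fueterSym μ e v u p))]
    exact sum_eq_zero fun b hb => by rw [← smul_sum, ih b hb, smul_zero]
  have hassoc : ∑ b ∈ w.toFinset, ∑ c ∈ (w.erase b).toFinset,
      associator μ (v c) (fueterSym μ e v ((w.erase b).erase c) p) (v b) = 0 :=
    sum_sum_erase_eq_zero w (f := fun b c u => associator μ (v c) (fueterSym μ e v u p) (v b))
      (fun _ _ _ => by rw [associator_swap_outer μ hLA hRA, neg_add_cancel])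
      fun _ _ => associator_self_outer μ hLA hRA _ _
  have houter : ∑ b ∈ w.toFinset, ∑ c ∈ (w.erase b).toFinset,
        μ (v c) (μ (fueterSym μ e v ((w.erase b).erase c) p) (v b)) -
      ∑ b ∈ w.toFinset, ∑ c ∈ (w.erase b).toFinset,
        μ (v b) (μ (v c) (fueterSym μ e v ((w.erase b).erase c) p)) = 0 := by
    rw [sum_sum_erase_comm w fun b c u => μ (v c) (μ (fueterSym μ e v u p) (v b)),
      ← sum_sub_distrib]
    exact sum_eq_zero fun b hb => by
      simp only [← sum_sub_distrib, ← map_sub, ← map_sum, ih b hb, map_zero]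
  rw [sum_congr rfl fun b _ => commutator_fueterSym_eq_sum μ e v p he_left he_right b (w.erase b)]
  simp [sum_sub_distrib, ← smul_sum, sum_add_distrib, hcoeff, hassoc, houter]
termination_by w.length
decreasing_by exact length_erase_lt (List.mem_toFinset.1 ‹_›)

theorem sum_fueterVar_mul_fderiv_fueterSym_mul_v (he_left : ∀ a, μ e a = a)
    (he_right : ∀ a, μ a e = a) (hv0 : v 0 = e) {w : List (Fin (m + 1))}
    (hw : dbarRight μ v (fueterSym μ e v w) p = 0) (b : Fin (m + 1)) :
    ∑ s, μ (μ (fueterVar e v b p) (fderiv ℝ (fueterSym μ e v w) p (Pi.single s 1))) (v s) =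
      -(p 0 • w.length • ∑ c ∈ w.toFinset,
        associator μ (v b) (fueterSym μ e v (w.erase c) p) (v c)) := by
  simp only [dbarRight] at hw
  have hassoc :
      ∑ s, associator μ (v b) (fderiv ℝ (fueterSym μ e v w) p (Pi.single s 1)) (v s) =
        w.length • ∑ c ∈ w.toFinset,
          associator μ (v b) (fueterSym μ e v (w.erase c) p) (v c) :=
    sum_apply_fderiv_fueterSym_single μ e v p he_left
      (fun s => (μ.flip (v s)).comp (μ (v b)) - (μ (v b)).comp (μ.flip (v s)))
      (by ext a; simp [hv0, he_right]) w
  calc _ = p b • ∑ s, μ (fderiv ℝ (fueterSym μ e v w) p (Pi.single s 1)) (v s) -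
        p 0 • (∑ s, associator μ (v b) (fderiv ℝ (fueterSym μ e v w) p (Pi.single s 1))
            (v s) +
          μ (v b) (∑ s, μ (fderiv ℝ (fueterSym μ e v w) p (Pi.single s 1)) (v s))) := by
        simp only [fueterVar_mul μ e v he_left, associator, map_sub, map_smul, sub_apply,
          smul_apply, sum_sub_distrib, ← smul_sum, map_sum]
        module
    _ = _ := by rw [hw, hassoc, map_zero, add_zero, smul_zero, zero_sub]

theorem dbarRight_fueterSym (he_left : ∀ a, μ e a = a) (he_right : ∀ a, μ a e = a)
    (hLA : ∀ a b : A, μ (μ a a) b = μ a (μ a b))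
    (hRA : ∀ a b : A, μ (μ a b) b = μ a (μ b b))
    (hv0 : v 0 = e) (w : List (Fin (m + 1))) :
    dbarRight μ v (fueterSym μ e v w) p = 0 := by
  rcases eq_or_ne w [] with rfl | hw
  · simp [dbarRight, fderiv_fueterSym_nil]
  calc dbarRight μ v (fueterSym μ e v w) p
      = ∑ b ∈ w.toFinset,
          (∑ s, μ (μ (fueterVar e v b (Pi.single s 1)) (fueterSym μ e v (w.erase b) p)) (v s) +
            ∑ s, μ (μ (fueterVar e v b p)
              (fderiv ℝ (fueterSym μ e v (w.erase b)) p (Pi.single s 1))) (v s)) := by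
        simp only [dbarRight, fderiv_fueterSym_apply μ e v p hw, map_sum, _root_.sum_apply,
          map_add, add_apply]
        rw [sum_comm]
        exact sum_congr rfl fun b _ => sum_add_distrib
    _ = ∑ b ∈ w.toFinset,
          ((μ (fueterSym μ e v (w.erase b) p) (v b) - μ (v b) (fueterSym μ e v (w.erase b) p)) +
            -(p 0 • (w.length - 1) • ∑ c ∈ (w.erase b).toFinset,
              associator μ (v b) (fueterSym μ e v ((w.erase b).erase c) p) (v c))) := by
        refine sum_congr rfl fun b hb => ?_
        rw [sum_fueterVar_single_mul_mul_v μ e v he_left he_right hv0,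
          sum_fueterVar_mul_fderiv_fueterSym_mul_v μ e v p he_left he_right hv0
            (dbarRight_fueterSym he_left he_right hLA hRA hv0 (w.erase b)),
          List.length_erase_of_mem (List.mem_toFinset.1 hb)]
    _ = 0 := by
        rw [sum_add_distrib, sum_commutator_fueterSym_erase μ e v p he_left he_right hLA hRA,
          sum_neg_distrib, ← smul_sum, ← smul_sum, sum_sum_erase_eq_zero w
            (f := fun b c u => associator μ (v b) (fueterSym μ e v u p) (v c))
            (fun _ _ _ => by rw [associator_swap_outer μ hLA hRA, neg_add_cancel])
            fun _ _ => associator_self_outer μ hLA hRA _ _]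
        simp
termination_by w.length
decreasing_by exact length_erase_lt (List.mem_toFinset.1 hb)

end FueterPolynomials

end Fueter

theorem fueter_polynomial_monogenic_general {A : Type*} [NormedAddCommGroup A] [NormedSpace ℝ A]
    (μ : A →L[ℝ] A →L[ℝ] A) (e : A)
    (he : ∀ a : A, μ e a = a ∧ μ a e = a)
    (hLA : ∀ a b : A, μ (μ a a) b = μ a (μ a b))
    (hRA : ∀ a b : A, μ (μ a b) b = μ a (μ b b))
    (m : ℕ) (v : Fin (m + 1) → A)
    (hv0 : v 0 = e)
    (l : List (Fin (m + 1)))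
    (z : Fin (m + 1) → ((Fin (m + 1)) → ℝ) → A)
    (hz : z = fun ℓ p => p ℓ • e - p 0 • v ℓ)
    (P : ((Fin (m + 1)) → ℝ) → A)
    (hP : P = fun p => ((l.length.factorial : ℝ))⁻¹ •
      ∑ l' ∈ l.permutations.toFinset, (l'.map (fun i => z i p)).foldr (fun a b => μ a b) e)
    (p : (Fin (m + 1)) → ℝ) :
    ∑ s, μ (v s) (fderiv ℝ P p (Pi.single s 1)) = 0 ∧
    ∑ s, μ (fderiv ℝ P p (Pi.single s 1)) (v s) = 0 := by
  have hP' : P = ((l.length.factorial : ℝ))⁻¹ • Fueter.fueterSym μ e v l := by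
    subst hz hP
    funext q
    simp [Fueter.fueterSym, Fueter.symProd]
  have hd : DifferentiableAt ℝ (Fueter.fueterSym μ e v l) p :=
    Fueter.differentiable_symProd μ e (Fueter.fueterVar e v) l p
  refine ⟨?_, ?_⟩
  · change Fueter.dbar μ v P p = 0
    rw [hP', Fueter.dbar_const_smul μ v p hd,
      Fueter.dbar_fueterSym μ e v p (fun a => (he a).1) hv0, smul_zero]
  · change Fueter.dbarRight μ v P p = 0
    rw [hP', Fueter.dbarRight_const_smul μ v p hd,
      Fueter.dbarRight_fueterSym μ e v p (fun a => (he a).1) (fun a => (he a).2) hLA hRA hv0,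
      smul_zero]

/-- For each multi-index `k` (encoded by the sorted list `l` of its indices, all nonzero),
the Fueter polynomial `P_k(x) = (1/k!) ∑_σ z_{i₁} ⋯ z_{i_k}` — the sum running over all
distinguishable permutations of `l`, products of Fueter variables `z_ℓ(x) = x_ℓ − x₀ v_ℓ`
taken right-to-left (the result being independent of the bracketing) — is both left and
right monogenic on the hypercomplex subspace `M ≅ ℝ^{m+1}`. -/
theorem fueter_polynomial_monogenic {A : Type*} [NormedAddCommGroup A] [NormedSpace ℝ A]
    [FiniteDimensional ℝ A]
    (μ : A →L[ℝ] A →L[ℝ] A) (e : A)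
    (he : ∀ a : A, μ e a = a ∧ μ a e = a)
    (hLA : ∀ a b : A, μ (μ a a) b = μ a (μ a b))
    (hRA : ∀ a b : A, μ (μ a b) b = μ a (μ b b))
    (m : ℕ) (hm : 1 ≤ m) (v : Fin (m + 1) → A)
    (hv0 : v 0 = e)
    (hvsq : ∀ s, s ≠ 0 → μ (v s) (v s) = -e)
    (hvanti : ∀ s t, s ≠ 0 → t ≠ 0 → s ≠ t → μ (v s) (v t) = -μ (v t) (v s))
    (l : List (Fin (m + 1))) (hl : (0 : Fin (m + 1)) ∉ l)
    (z : Fin (m + 1) → ((Fin (m + 1)) → ℝ) → A)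
    (hz : z = fun ℓ p => p ℓ • e - p 0 • v ℓ)
    (P : ((Fin (m + 1)) → ℝ) → A)
    (hP : P = fun p => ((l.length.factorial : ℝ))⁻¹ •
      ∑ l' ∈ l.permutations.toFinset, (l'.map (fun i => z i p)).foldr (fun a b => μ a b) e)
    (p : (Fin (m + 1)) → ℝ) :
    ∑ s, μ (v s) (fderiv ℝ P p (Pi.single s 1)) = 0 ∧
    ∑ s, μ (fderiv ℝ P p (Pi.single s 1)) (v s) = 0 :=
  fueter_polynomial_monogenic_general μ e he hLA hRA m v hv0 l z hz P hP p
end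

section
/- Let Ω ⊆ M be a domain (connected open set in a hypercomplex subspace M ≅ ℝ^{m+1} of a real alternative *-algebra A), and let f : Ω → A be C² and left monogenic (∂̄_B f = 0). Then f is harmonic: Δ_B f := ∑_{s=0}^m ∂ₛ²f = 0 on Ω. -/
/-!
Differentiating `∂̄_B f = 0` in the direction `t` gives `∑ₛ vₛ (∂ₜ∂ₛ f) = 0` for every `t`.
Multiplying on the left by the conjugate `v̄ₜ` and summing over `t` computes `∂_B ∂̄_B f`: by left
alternativity the basis obeys the Clifford relations `v̄ₜ(vₛ y) + v̄ₛ(vₜ y) = 2 δₛₜ y`, so with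
the symmetry of the Hessian all mixed terms cancel in pairs and only `∑ₜ ∂ₜ² f` survives.
-/

open Finset

theorem Finset.sum_sum_eq_sum_diag_of_antisymm {ι M : Type*} [Fintype ι] [DecidableEq ι]
    [AddCommGroup M] (G : ι → ι → M) (hG : ∀ s t, s ≠ t → G s t + G t s = 0) :
    ∑ s, ∑ t, G s t = ∑ s, G s s := by
  have hoff : ∑ p ∈ univ.offDiag, G p.1 p.2 = 0 :=
    sum_involution (fun p _ => p.swap) (fun p hp => hG _ _ (mem_offDiag.1 hp).2.2)
      (fun p hp _ => by simpa [Prod.ext_iff, eq_comm] using (mem_offDiag.1 hp).2.2)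
      (fun p hp => by simpa [eq_comm] using hp) (fun p _ => p.swap_swap)
  rw [← sum_product' univ univ G, ← diag_union_offDiag,
    sum_union (disjoint_diag_offDiag _), hoff, add_zero, sum_diag]

namespace Hypercomplex

variable {R A : Type*} [CommRing R] [AddCommGroup A] [Module R A] {μ : A →ₗ[R] A →ₗ[R] A}

theorem linearized_left_alternative (hLA : ∀ a b, μ (μ a a) b = μ a (μ a b)) (a b y : A) :
    μ (μ a b) y + μ (μ b a) y = μ a (μ b y) + μ b (μ a y) := by
  have h := hLA (a + b) y
  simp only [map_add, LinearMap.add_apply, hLA a y, hLA b y] at h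
  linear_combination (norm := module) h

/-- The paper's `v̄ₜ`, so that `∂_B = ∑ₜ v̄ₜ ∂ₜ`. -/
def conj {n : ℕ} (v : Fin (n + 1) → A) (t : Fin (n + 1)) : A := if t = 0 then v t else -v t

variable {e : A} {n : ℕ} {v : Fin (n + 1) → A}

theorem conj_mul_mul_self (he : ∀ a, μ e a = a) (hLA : ∀ a b, μ (μ a a) b = μ a (μ a b))
    (hv0 : v 0 = e) (hvsq : ∀ s, s ≠ 0 → μ (v s) (v s) = -e) (t : Fin (n + 1)) (y : A) :
    μ (conj v t) (μ (v t) y) = y := by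
  by_cases ht : t = 0
  · simp [conj, ht, hv0, he]
  · simp [conj, ht, ← hLA, hvsq t ht, he]

theorem conj_mul_mul_add_conj_mul_mul (he : ∀ a, μ e a = a)
    (hLA : ∀ a b, μ (μ a a) b = μ a (μ a b)) (hv0 : v 0 = e)
    (hvanti : ∀ s t, s ≠ 0 → t ≠ 0 → s ≠ t → μ (v s) (v t) = -μ (v t) (v s))
    {s t : Fin (n + 1)} (hst : s ≠ t) (y : A) :
    μ (conj v s) (μ (v t) y) + μ (conj v t) (μ (v s) y) = 0 := by
  by_cases hs : s = 0
  · subst hs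
    simp [conj, Ne.symm hst, hv0, he]
  by_cases ht : t = 0
  · subst ht
    simp [conj, hst, hv0, he]
  simp only [conj, hs, ht, if_false, map_neg, LinearMap.neg_apply, ← neg_add,
    ← linearized_left_alternative hLA, hvanti s t hs ht hst, neg_add_cancel, neg_zero]

theorem sum_diag_eq_zero_of_sum_mul_eq_zero (he : ∀ a, μ e a = a)
    (hLA : ∀ a b, μ (μ a a) b = μ a (μ a b)) (hv0 : v 0 = e)
    (hvsq : ∀ s, s ≠ 0 → μ (v s) (v s) = -e)
    (hvanti : ∀ s t, s ≠ 0 → t ≠ 0 → s ≠ t → μ (v s) (v t) = -μ (v t) (v s))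
    {d : Fin (n + 1) → Fin (n + 1) → A} (hd : ∀ s t, d s t = d t s)
    (hdirac : ∀ t, ∑ s, μ (v s) (d s t) = 0) :
    ∑ t, d t t = 0 :=
  calc ∑ t, d t t = ∑ t, ∑ s, μ (conj v t) (μ (v s) (d s t)) := by
        rw [Finset.sum_sum_eq_sum_diag_of_antisymm]
        · simp only [conj_mul_mul_self he hLA hv0 hvsq]
        · intro t s hts
          rw [hd s t, conj_mul_mul_add_conj_mul_mul he hLA hv0 hvanti hts]
    _ = ∑ t, μ (conj v t) (∑ s, μ (v s) (d s t)) := by simp only [map_sum]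
    _ = 0 := by simp only [hdirac, map_zero, sum_const_zero]

end Hypercomplex

section SecondDerivative

variable {𝕜 E F G : Type*} [NontriviallyNormedField 𝕜] [NormedAddCommGroup E] [NormedSpace 𝕜 E]
  [NormedAddCommGroup F] [NormedSpace 𝕜 F] [NormedAddCommGroup G] [NormedSpace 𝕜 G]
  {f : E → F} {x : E}

theorem fderiv_fderiv_apply (h : DifferentiableAt 𝕜 (fderiv 𝕜 f) x) (u w : E) :
    fderiv 𝕜 (fun p => fderiv 𝕜 f p u) x w = fderiv 𝕜 (fderiv 𝕜 f) x w u := by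
  simp [fderiv_clm_apply h (differentiableAt_const u)]

theorem clm_comp_fderiv_fderiv_eq_zero (Φ : (E →L[𝕜] F) →L[𝕜] G)
    (h : DifferentiableAt 𝕜 (fderiv 𝕜 f) x) (hΦ : (fun p => Φ (fderiv 𝕜 f p)) =ᶠ[nhds x] 0) :
    Φ.comp (fderiv 𝕜 (fderiv 𝕜 f) x) = 0 := by
  rw [← (Φ.hasFDerivAt.comp x h.hasFDerivAt).fderiv, Function.comp_def,
    hΦ.fderiv_eq, fderiv_zero, Pi.zero_apply]

end SecondDerivative

section LeftDirac

variable {ι A : Type*} [Fintype ι] [DecidableEq ι] [NormedAddCommGroup A] [NormedSpace ℝ A]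

/-- The symbol of `∂̄_B`: `∂̄_B f (x) = leftDirac μ v (fderiv ℝ f x)`. -/
noncomputable def leftDirac (μ : A →L[ℝ] A →L[ℝ] A) (v : ι → A) : ((ι → ℝ) →L[ℝ] A) →L[ℝ] A :=
  ∑ s, (μ (v s)).comp (ContinuousLinearMap.apply ℝ A (Pi.single s 1))

theorem leftDirac_apply (μ : A →L[ℝ] A →L[ℝ] A) (v : ι → A) (L : (ι → ℝ) →L[ℝ] A) :
    leftDirac μ v L = ∑ s, μ (v s) (L (Pi.single s 1)) := by
  simp [leftDirac]

end LeftDirac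

theorem monogenic_is_harmonic_general {A : Type*} [NormedAddCommGroup A] [NormedSpace ℝ A]
    (μ : A →L[ℝ] A →L[ℝ] A) (e : A)
    (he : ∀ a : A, μ e a = a ∧ μ a e = a)
    (hLA : ∀ a b : A, μ (μ a a) b = μ a (μ a b))
    (m : ℕ) (v : Fin (m + 1) → A)
    (hv0 : v 0 = e)
    (hvsq : ∀ s, s ≠ 0 → μ (v s) (v s) = -e)
    (hvanti : ∀ s t, s ≠ 0 → t ≠ 0 → s ≠ t → μ (v s) (v t) = -μ (v t) (v s))
    (Ω : Set ((Fin (m + 1)) → ℝ)) (hΩopen : IsOpen Ω)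
    (f : ((Fin (m + 1)) → ℝ) → A)
    (hC2 : ContDiffOn ℝ 2 f Ω)
    (hmono : ∀ x ∈ Ω, ∑ s, μ (v s) (fderiv ℝ f x (Pi.single s 1)) = 0) :
    ∀ x ∈ Ω, ∑ s, fderiv ℝ (fun p => fderiv ℝ f p (Pi.single s 1)) x (Pi.single s 1) = 0 := by
  intro x hx
  have hf : ContDiffAt ℝ 2 f x := hC2.contDiffAt (hΩopen.mem_nhds hx)
  have hdiff : DifferentiableAt ℝ (fderiv ℝ f) x :=
    (hf.fderiv_right le_rfl).differentiableAt one_ne_zero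
  set D := fderiv ℝ (fderiv ℝ f) x
  have hsymm : ∀ u w, D u w = D w u :=
    hf.isSymmSndFDerivAt minSmoothness_of_isRCLikeNormedField.le
  have hdirac : (leftDirac μ v).comp D = 0 :=
    clm_comp_fderiv_fderiv_eq_zero _ hdiff <| Filter.eventually_of_mem (hΩopen.mem_nhds hx)
      fun p hp => (leftDirac_apply μ v _).trans (hmono p hp)
  simp only [fderiv_fderiv_apply hdiff]
  refine Hypercomplex.sum_diag_eq_zero_of_sum_mul_eq_zero (μ := μ.toLinearMap₁₂)
    (fun a => (he a).1) hLA hv0 hvsq hvanti (fun s t => hsymm _ _) fun t => ?_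
  simpa [leftDirac_apply] using congrArg (· (Pi.single t 1)) hdirac

/-- Let `Ω` be a domain (connected open set) in the hypercomplex subspace `M ≅ ℝ^{m+1}` of
a real alternative `∗`-algebra `A` (multiplication `μ`, unity `e`, hypercomplex basis
`v 0 = e, v 1, …, v m`), and `f : Ω → A` a `C²` left monogenic function.  Then `f` is
harmonic on `Ω`: `Δ_B f = ∑ₛ ∂ₛ² f = 0`. -/
theorem monogenic_is_harmonic {A : Type*} [NormedAddCommGroup A] [NormedSpace ℝ A]
    [FiniteDimensional ℝ A]
    (μ : A →L[ℝ] A →L[ℝ] A) (e : A)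
    (he : ∀ a : A, μ e a = a ∧ μ a e = a)
    (hLA : ∀ a b : A, μ (μ a a) b = μ a (μ a b))
    (hRA : ∀ a b : A, μ (μ a b) b = μ a (μ b b))
    (m : ℕ) (hm : 1 ≤ m) (v : Fin (m + 1) → A)
    (hv0 : v 0 = e)
    (hvsq : ∀ s, s ≠ 0 → μ (v s) (v s) = -e)
    (hvanti : ∀ s t, s ≠ 0 → t ≠ 0 → s ≠ t → μ (v s) (v t) = -μ (v t) (v s))
    (Ω : Set ((Fin (m + 1)) → ℝ)) (hΩopen : IsOpen Ω) (hΩconn : IsConnected Ω)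
    (f : ((Fin (m + 1)) → ℝ) → A)
    (hC2 : ContDiffOn ℝ 2 f Ω)
    (hmono : ∀ x ∈ Ω, ∑ s, μ (v s) (fderiv ℝ f x (Pi.single s 1)) = 0) :
    ∀ x ∈ Ω, ∑ s, fderiv ℝ (fun p => fderiv ℝ f p (Pi.single s 1)) x (Pi.single s 1) = 0 :=
  monogenic_is_harmonic_general μ e he hLA m v hv0 hvsq hvanti Ω hΩopen f hC2 hmono
end

section
/- Let Ω ⊆ M be a domain and f : Ω → A left monogenic and real analytic. If f vanishes on an m-dimensional smooth submanifold N ⊆ Ω, then f ≡ 0 on Ω. In particular, at any point y ∈ N the full gradient of f vanishes: ∂ₛf(y) = 0 for s = 0,…,m. -/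
lemma mono_keyalg {A : Type*} [NormedAddCommGroup A] [NormedSpace ℝ A]
    (μ : A →L[ℝ] A →L[ℝ] A) (e : A)
    (he : ∀ a : A, μ e a = a ∧ μ a e = a)
    (hLA : ∀ a b : A, μ (μ a a) b = μ a (μ a b))
    (m : ℕ) (v : Fin (m + 1) → A)
    (hv0 : v 0 = e)
    (hvsq : ∀ s, s ≠ 0 → μ (v s) (v s) = -e)
    (hvanti : ∀ s t, s ≠ 0 → t ≠ 0 → s ≠ t → μ (v s) (v t) = -μ (v t) (v s))
    (lam : Fin (m + 1) → ℝ) (hlam : lam ≠ 0) (c : A)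
    (h : μ (∑ s, lam s • v s) c = 0) : c = 0 := by
  set w : A := ∑ s, lam s • v s with hw
  have hμw : ∀ b : A, μ w b = ∑ s, lam s • μ (v s) b := by
    intro b
    rw [hw, map_sum]
    simp [ContinuousLinearMap.sum_apply]
  -- expand μ w w as a double sum
  have expand : μ w w = ∑ s, ∑ t, (lam s * lam t) • μ (v s) (v t) := by
    rw [hμw]
    congr 1
    ext s
    conv_lhs => rw [hw]
    simp [map_sum, Finset.smul_sum, smul_smul]
  -- the off-diagonal pure-imaginary part cancels
  set G : Fin m → Fin m → A := fun s t => (lam s.succ * lam t.succ) • μ (v s.succ) (v t.succ)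
    with hG
  have hpair : ∀ s t : Fin m, G s t + G t s
      = if t = s then (2 * (lam s.succ * lam s.succ)) • (-e) else 0 := by
    intro s t
    by_cases hst : t = s
    · subst hst
      rw [if_pos rfl]
      simp only [hG]
      rw [hvsq _ (Fin.succ_ne_zero t), ← add_smul]
      ring_nf
    · rw [if_neg hst]
      simp only [hG]
      rw [hvanti _ _ (Fin.succ_ne_zero s) (Fin.succ_ne_zero t)
        (fun hc => hst (Fin.succ_injective m hc).symm)]
      rw [smul_neg, mul_comm]
      exact neg_add_cancel _
  have hT : (∑ s : Fin m, ∑ t : Fin m, G s t) = ∑ s : Fin m, (lam s.succ * lam s.succ) • (-e) := by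
    have hcomm : (∑ s : Fin m, ∑ t : Fin m, G s t) = ∑ s : Fin m, ∑ t : Fin m, G t s :=
      Finset.sum_comm
    have h2 : (∑ s : Fin m, ∑ t : Fin m, (G s t + G t s))
        = (∑ s : Fin m, ∑ t : Fin m, G s t) + (∑ s : Fin m, ∑ t : Fin m, G s t) := by
      simp only [Finset.sum_add_distrib]
      rw [← hcomm]
    have h3 : (∑ s : Fin m, ∑ t : Fin m, (G s t + G t s))
        = ∑ s : Fin m, (2 * (lam s.succ * lam s.succ)) • (-e) := by
      refine Finset.sum_congr rfl fun s _ => ?_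
      simp [hpair]
    have h4 : (2:ℝ) • (∑ s : Fin m, ∑ t : Fin m, G s t)
        = (2:ℝ) • (∑ s : Fin m, (lam s.succ * lam s.succ) • (-e)) := by
      rw [two_smul, two_smul, ← h2, h3, ← Finset.sum_add_distrib]
      refine Finset.sum_congr rfl fun s _ => ?_
      rw [← add_smul]; ring_nf
    exact smul_right_injective A (two_ne_zero) h4
  -- compute μ w w
  have hww : μ w w = (2 * lam 0) • w - (∑ s, lam s * lam s) • e := by
    rw [expand, Fin.sum_univ_succ]
    have h0 : (∑ t, (lam 0 * lam t) • μ (v 0) (v t)) = lam 0 • w := by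
      rw [hw, Finset.smul_sum]
      refine Finset.sum_congr rfl fun t _ => ?_
      rw [hv0, (he (v t)).1, smul_smul]
    rw [h0]
    have h1 : ∀ s : Fin m, (∑ t, (lam s.succ * lam t) • μ (v s.succ) (v t))
        = (lam s.succ * lam 0) • v s.succ + ∑ t : Fin m, G s t := by
      intro s
      rw [Fin.sum_univ_succ, hv0, (he (v s.succ)).2]
    rw [Finset.sum_congr rfl fun s _ => h1 s, Finset.sum_add_distrib, hT]
    have h5 : (∑ s : Fin m, (lam s.succ * lam 0) • v s.succ)
        = lam 0 • w - (lam 0 * lam 0) • e := by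
      rw [hw, Fin.sum_univ_succ, smul_add, hv0, smul_smul]
      rw [add_sub_cancel_left]
      rw [Finset.smul_sum]
      refine Finset.sum_congr rfl fun s _ => ?_
      rw [smul_smul]; ring_nf
    rw [h5, Fin.sum_univ_succ, add_smul]
    have h6 : (∑ s : Fin m, (lam s.succ * lam s.succ) • (-e))
        = -((∑ s : Fin m, lam s.succ * lam s.succ) • e) := by
      rw [Finset.sum_smul]
      simp [smul_neg]
    rw [h6]
    module
  -- now the alternative law finishes the job
  have key : μ (μ w w) c = 0 := by rw [hLA, h, map_zero]
  rw [hww] at key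
  have : ((2 * lam 0) • (μ w) - (∑ s, lam s * lam s) • (μ e)) c = 0 := by
    rw [← key, map_sub, map_smul, map_smul]
  rw [ContinuousLinearMap.sub_apply, ContinuousLinearMap.smul_apply,
    ContinuousLinearMap.smul_apply, h, smul_zero, (he c).1, zero_sub, neg_eq_zero] at this
  have hq : (∑ s, lam s * lam s) ≠ 0 := by
    intro hq0
    apply hlam
    ext s
    have := Finset.sum_eq_zero_iff_of_nonneg
      (fun t _ => mul_self_nonneg (lam t)) |>.mp hq0 s (Finset.mem_univ s)
    exact mul_self_eq_zero.mp this
  exact (smul_eq_zero.mp this).resolve_left hq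

lemma mono_grad_vanish {A : Type*} [NormedAddCommGroup A] [NormedSpace ℝ A]
    [FiniteDimensional ℝ A]
    (μ : A →L[ℝ] A →L[ℝ] A) (e : A)
    (he : ∀ a : A, μ e a = a ∧ μ a e = a)
    (hLA : ∀ a b : A, μ (μ a a) b = μ a (μ a b))
    (m : ℕ) (v : Fin (m + 1) → A)
    (hv0 : v 0 = e)
    (hvsq : ∀ s, s ≠ 0 → μ (v s) (v s) = -e)
    (hvanti : ∀ s t, s ≠ 0 → t ≠ 0 → s ≠ t → μ (v s) (v t) = -μ (v t) (v s))
    (Ω : Set ((Fin (m + 1)) → ℝ)) (hΩopen : IsOpen Ω)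
    (N : Set ((Fin (m + 1)) → ℝ)) (hNΩ : N ⊆ Ω)
    (hNmanifold : ∀ y ∈ N, ∃ (ψ : ((Fin m) → ℝ) → ((Fin (m + 1)) → ℝ))
        (U : Set ((Fin m) → ℝ)), IsOpen U ∧ 0 ∈ U ∧ ContDiffOn ℝ (⊤ : ℕ∞) ψ U ∧
        ψ 0 = y ∧ ψ '' U ⊆ N ∧ Function.Injective (fderiv ℝ ψ 0))
    (g : ((Fin (m + 1)) → ℝ) → A)
    (hgan : AnalyticOnNhd ℝ g Ω)
    (hgmono : ∀ x ∈ Ω, ∑ s, μ (v s) (fderiv ℝ g x (Pi.single s 1)) = 0)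
    (hgN : ∀ y ∈ N, g y = 0)
    (keyalg : ∀ (lam : Fin (m + 1) → ℝ), lam ≠ 0 → ∀ c : A,
        μ (∑ s, lam s • v s) c = 0 → c = 0)
    (y : (Fin (m + 1)) → ℝ) (hy : y ∈ N) :
    ∀ s : Fin (m + 1), fderiv ℝ g y (Pi.single s 1) = 0 := by
  obtain ⟨ψ, U, hUopen, hU0, hψC, hψ0, hψN, hψinj⟩ := hNmanifold y hy
  have hyΩ : y ∈ Ω := hNΩ hy
  set D : ((Fin (m + 1)) → ℝ) →L[ℝ] A := fderiv ℝ g y with hD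
  set T : ((Fin m) → ℝ) →L[ℝ] ((Fin (m + 1)) → ℝ) := fderiv ℝ ψ 0 with hT
  -- chain rule: D ∘ T = 0
  have hψdiff : DifferentiableAt ℝ ψ 0 :=
    (hψC.contDiffAt (hUopen.mem_nhds hU0)).differentiableAt (by simp)
  have hgdiff : DifferentiableAt ℝ g y := (hgan y hyΩ).differentiableAt
  have hcomp0 : fderiv ℝ (g ∘ ψ) 0 = 0 := by
    have hev : g ∘ ψ =ᶠ[nhds 0] (fun _ => (0 : A)) := by
      filter_upwards [hUopen.mem_nhds hU0] with z hz
      exact hgN (ψ z) (hψN ⟨z, hz, rfl⟩)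
    rw [hev.fderiv_eq, fderiv_fun_const]
    rfl
  have hchain : D.comp T = 0 := by
    rw [hD, hT, ← hψ0] at *
    rw [← fderiv_comp 0 hgdiff hψdiff, hcomp0]
  have hDW : ∀ z, D (T z) = 0 := by
    intro z
    have := congrFun (congrArg (fun (L : ((Fin m) → ℝ) →L[ℝ] A) => (L : ((Fin m) → ℝ) → A)) hchain) z
    simpa using this
  -- the range of T is an m-dimensional subspace
  set W : Submodule ℝ ((Fin (m + 1)) → ℝ) := LinearMap.range (T : ((Fin m) → ℝ) →ₗ[ℝ] _)
    with hW
  have hWrank : Module.finrank ℝ W = m := by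
    rw [hW, LinearMap.finrank_range_of_inj hψinj]
    simp [Module.finrank_pi]
  -- quotient has dimension 1
  have hQrank : Module.finrank ℝ (((Fin (m + 1)) → ℝ) ⧸ W) = 1 := by
    have := Submodule.finrank_quotient_add_finrank W
    have htot : Module.finrank ℝ ((Fin (m + 1)) → ℝ) = m + 1 := by simp [Module.finrank_pi]
    omega
  obtain ⟨u, hu⟩ : ∃ u, u ∉ W := by
    by_contra hc
    push_neg at hc
    have : W = ⊤ := Submodule.eq_top_iff'.mpr hc
    rw [this] at hWrank
    rw [finrank_top] at hWrank
    simp [Module.finrank_pi] at hWrank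
  have humk : (Submodule.Quotient.mk u : ((Fin (m + 1)) → ℝ) ⧸ W) ≠ 0 := by
    simpa [Submodule.Quotient.mk_eq_zero] using hu
  have hspan : ∀ q : ((Fin (m + 1)) → ℝ) ⧸ W, ∃ c : ℝ, c • (Submodule.Quotient.mk u) = q :=
    (finrank_eq_one_iff_of_nonzero' _ humk).mp hQrank
  -- coordinates
  have hdecomp : ∀ s : Fin (m + 1), ∃ c : ℝ, D (Pi.single s 1) = c • D u := by
    intro s
    obtain ⟨c, hc⟩ := hspan (Submodule.Quotient.mk (Pi.single s 1))
    refine ⟨c, ?_⟩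
    have hmem : Pi.single s 1 - c • u ∈ W := by
      rw [← Submodule.Quotient.mk_eq_zero, Submodule.Quotient.mk_sub]
      rw [Submodule.Quotient.mk_smul, hc, sub_self]
    obtain ⟨z, hz⟩ := hmem
    have : D (Pi.single s 1 - c • u) = 0 := by
      rw [← hz]; exact hDW z
    rw [map_sub, map_smul, sub_eq_zero] at this
    exact this
  choose lam hlam using hdecomp
  by_cases hlam0 : lam = 0
  · intro s
    rw [hlam s, hlam0]
    simp
  · -- monogenicity gives μ (∑ lam s • v s) (D u) = 0
    have hmono := hgmono y hyΩ
    have hsum : μ (∑ s, lam s • v s) (D u) = 0 := by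
      rw [map_sum]
      rw [ContinuousLinearMap.sum_apply]
      rw [← hmono]
      refine Finset.sum_congr rfl fun s _ => ?_
      rw [map_smul, ContinuousLinearMap.smul_apply, ← map_smul, ← hlam s]
    have hc0 : D u = 0 := keyalg lam hlam0 (D u) hsum
    intro s
    rw [hlam s, hc0, smul_zero]

lemma mono_deriv_good {A : Type*} [NormedAddCommGroup A] [NormedSpace ℝ A]
    [FiniteDimensional ℝ A]
    (μ : A →L[ℝ] A →L[ℝ] A)
    (m : ℕ) (v : Fin (m + 1) → A)
    (Ω : Set ((Fin (m + 1)) → ℝ)) (hΩopen : IsOpen Ω)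
    (g : ((Fin (m + 1)) → ℝ) → A)
    (hgan : AnalyticOnNhd ℝ g Ω)
    (hgmono : ∀ x ∈ Ω, ∑ s, μ (v s) (fderiv ℝ g x (Pi.single s 1)) = 0)
    (t : Fin (m + 1)) :
    AnalyticOnNhd ℝ (fun z => fderiv ℝ g z (Pi.single t 1)) Ω ∧
    (∀ x ∈ Ω, ∑ s, μ (v s)
      (fderiv ℝ (fun z => fderiv ℝ g z (Pi.single t 1)) x (Pi.single s 1)) = 0) := by
  have hfan' : AnalyticOnNhd ℝ (fderiv ℝ g) Ω := hgan.fderiv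
  have han : ∀ u, AnalyticOnNhd ℝ (fun z => fderiv ℝ g z u) Ω := by
    intro u x hx
    exact ((ContinuousLinearMap.apply ℝ A u).analyticAt (fderiv ℝ g x)).comp (hfan' x hx)
  -- swap of second derivatives
  have hswap : ∀ x ∈ Ω, ∀ u w : (Fin (m + 1)) → ℝ,
      fderiv ℝ (fun z => fderiv ℝ g z u) x w = fderiv ℝ (fun z => fderiv ℝ g z w) x u := by
    intro x hx u w
    have hdiff2 : DifferentiableAt ℝ (fderiv ℝ g) x := (hfan' x hx).differentiableAt
    have hre : ∀ u' w' : (Fin (m + 1)) → ℝ,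
        fderiv ℝ (fun z => fderiv ℝ g z u') x w' = fderiv ℝ (fderiv ℝ g) x w' u' := by
      intro u' w'
      have hcm : (fun z => fderiv ℝ g z u')
          = (ContinuousLinearMap.apply ℝ A u') ∘ (fderiv ℝ g) := rfl
      rw [hcm, fderiv_comp x ((ContinuousLinearMap.apply ℝ A u').differentiableAt) hdiff2,
        ContinuousLinearMap.fderiv]
      rfl
    rw [hre u w, hre w u]
    have hsymm : IsSymmSndFDerivAt ℝ g x := by
      refine ContDiffAt.isSymmSndFDerivAt (n := 2) ?_ (by simp)
      exact ((hgan x hx).contDiffAt).of_le le_top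
    exact hsymm w u
  -- differentiating the monogenicity identity
  have hA : ∀ x ∈ Ω, ∑ s, μ (v s)
      (fderiv ℝ (fun z => fderiv ℝ g z (Pi.single s 1)) x (Pi.single t 1)) = 0 := by
    intro x hx
    have hzero : (fun z => ∑ s, μ (v s) (fderiv ℝ g z (Pi.single s 1))) =ᶠ[nhds x]
        (fun _ => (0 : A)) := by
      filter_upwards [hΩopen.mem_nhds hx] with z hz
      exact hgmono z hz
    have hfz : fderiv ℝ (fun z => ∑ s, μ (v s) (fderiv ℝ g z (Pi.single s 1))) x = 0 := by
      rw [hzero.fderiv_eq, fderiv_fun_const]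
      rfl
    have hdiffs : ∀ s : Fin (m + 1),
        DifferentiableAt ℝ (fun z => μ (v s) (fderiv ℝ g z (Pi.single s 1))) x := by
      intro s
      exact ((μ (v s)).differentiableAt).comp x ((han (Pi.single s 1) x hx).differentiableAt)
    have hsum : fderiv ℝ (fun z => ∑ s, μ (v s) (fderiv ℝ g z (Pi.single s 1))) x
        = ∑ s, fderiv ℝ (fun z => μ (v s) (fderiv ℝ g z (Pi.single s 1))) x :=
      fderiv_fun_sum fun s _ => hdiffs s
    have hterm : ∀ s : Fin (m + 1),
        fderiv ℝ (fun z => μ (v s) (fderiv ℝ g z (Pi.single s 1))) x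
        = (μ (v s)).comp (fderiv ℝ (fun z => fderiv ℝ g z (Pi.single s 1)) x) := by
      intro s
      have hcm : (fun z => μ (v s) (fderiv ℝ g z (Pi.single s 1)))
          = (μ (v s)) ∘ (fun z => fderiv ℝ g z (Pi.single s 1)) := rfl
      rw [hcm, fderiv_comp x ((μ (v s)).differentiableAt)
        ((han (Pi.single s 1) x hx).differentiableAt), ContinuousLinearMap.fderiv]
    have hkey := congrFun (congrArg (fun (L : ((Fin (m+1)) → ℝ) →L[ℝ] A) =>
      (L : ((Fin (m+1)) → ℝ) → A)) (hsum.symm.trans hfz)) (Pi.single t 1)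
    simp only [ContinuousLinearMap.coe_sum', Finset.sum_apply,
      ContinuousLinearMap.zero_apply, hterm, ContinuousLinearMap.coe_comp',
      Function.comp_apply] at hkey
    exact hkey
  refine ⟨han _, fun x hx => ?_⟩
  rw [← hA x hx]
  refine Finset.sum_congr rfl fun s _ => ?_
  rw [hswap x hx (Pi.single t 1) (Pi.single s 1)]

lemma mono_iter_vanish {A : Type*} [NormedAddCommGroup A] [NormedSpace ℝ A]
    [FiniteDimensional ℝ A]
    (μ : A →L[ℝ] A →L[ℝ] A) (e : A)
    (he : ∀ a : A, μ e a = a ∧ μ a e = a)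
    (hLA : ∀ a b : A, μ (μ a a) b = μ a (μ a b))
    (m : ℕ) (v : Fin (m + 1) → A)
    (hv0 : v 0 = e)
    (hvsq : ∀ s, s ≠ 0 → μ (v s) (v s) = -e)
    (hvanti : ∀ s t, s ≠ 0 → t ≠ 0 → s ≠ t → μ (v s) (v t) = -μ (v t) (v s))
    (Ω : Set ((Fin (m + 1)) → ℝ)) (hΩopen : IsOpen Ω)
    (N : Set ((Fin (m + 1)) → ℝ)) (hNΩ : N ⊆ Ω)
    (hNmanifold : ∀ y ∈ N, ∃ (ψ : ((Fin m) → ℝ) → ((Fin (m + 1)) → ℝ))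
        (U : Set ((Fin m) → ℝ)), IsOpen U ∧ 0 ∈ U ∧ ContDiffOn ℝ (⊤ : ℕ∞) ψ U ∧
        ψ 0 = y ∧ ψ '' U ⊆ N ∧ Function.Injective (fderiv ℝ ψ 0)) :
    ∀ (n : ℕ) (g : ((Fin (m + 1)) → ℝ) → A), AnalyticOnNhd ℝ g Ω →
      (∀ x ∈ Ω, ∑ s, μ (v s) (fderiv ℝ g x (Pi.single s 1)) = 0) →
      (∀ y ∈ N, g y = 0) →
      ∀ y ∈ N, iteratedFDeriv ℝ n g y = 0 := by
  have keyalg := mono_keyalg μ e he hLA m v hv0 hvsq hvanti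
  intro n
  induction n with
  | zero =>
    intro g hgan hgm hgN y hy
    refine ContinuousMultilinearMap.ext fun x => ?_
    rw [iteratedFDeriv_zero_apply, hgN y hy]
    rfl
  | succ n IH =>
    intro g hgan hgm hgN y hy
    have hyΩ : y ∈ Ω := hNΩ hy
    have hgood := fun t => mono_deriv_good μ m v Ω hΩopen g hgan hgm t
    have hgN' : ∀ t, ∀ y' ∈ N, fderiv ℝ g y' (Pi.single t 1) = 0 := fun t y' hy' =>
      mono_grad_vanish μ e he hLA m v hv0 hvsq hvanti Ω hΩopen N hNΩ hNmanifold
        g hgan hgm hgN keyalg y' hy' t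
    have hbasis : ∀ wdx : Fin (n + 1) → Fin (m + 1),
        iteratedFDeriv ℝ (n + 1) g y (fun i => Pi.single (wdx i) 1) = 0 := by
      intro wdx
      rw [iteratedFDeriv_succ_apply_right]
      set u : (Fin (m + 1)) → ℝ := Pi.single (wdx (Fin.last n)) 1 with hu
      set L : (((Fin (m + 1)) → ℝ) →L[ℝ] A) →L[ℝ] A := ContinuousLinearMap.apply ℝ A u with hL
      have hcd : ContDiffOn ℝ (n : ℕ∞) (fderiv ℝ g) Ω :=
        (hgan.fderiv).contDiffOn hΩopen.uniqueDiffOn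
      have hWc : iteratedFDerivWithin ℝ n (L ∘ fderiv ℝ g) Ω y
          = L.compContinuousMultilinearMap (iteratedFDerivWithin ℝ n (fderiv ℝ g) Ω y) :=
        L.iteratedFDerivWithin_comp_left (hcd y hyΩ) hΩopen.uniqueDiffOn hyΩ le_rfl
      rw [iteratedFDerivWithin_of_isOpen n hΩopen hyΩ,
        iteratedFDerivWithin_of_isOpen n hΩopen hyΩ] at hWc
      have hLg : (L ∘ fderiv ℝ g) = fun z => fderiv ℝ g z u := rfl
      rw [hLg] at hWc
      have hzero : iteratedFDeriv ℝ n (fun z => fderiv ℝ g z u) y = 0 :=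
        IH (fun z => fderiv ℝ g z u) (hgood (wdx (Fin.last n))).1
          (hgood (wdx (Fin.last n))).2 (hgN' (wdx (Fin.last n))) y hy
      have h0 : L.compContinuousMultilinearMap (iteratedFDeriv ℝ n (fderiv ℝ g) y) = 0 :=
        hWc ▸ hzero
      have happ := ContinuousMultilinearMap.ext_iff.mp h0
        (Fin.init ((fun i => Pi.single (wdx i) 1) : Fin (n + 1) → ((Fin (m + 1)) → ℝ)))
      simpa [hL] using happ
    have hml : (iteratedFDeriv ℝ (n + 1) g y).toMultilinearMap
        = (0 : ContinuousMultilinearMap ℝ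
            (fun _ : Fin (n + 1) => ((Fin (m + 1)) → ℝ)) A).toMultilinearMap := by
      refine Module.Basis.ext_multilinear (fun _ => Pi.basisFun ℝ (Fin (m + 1))) fun wdx => ?_
      simpa [Pi.basisFun_apply] using hbasis wdx
    refine ContinuousMultilinearMap.ext fun x => ?_
    exact DFunLike.congr_fun hml x

/-- Identity theorem: let `Ω` be a domain in the hypercomplex subspace `M ≅ ℝ^{m+1}` of a
real alternative `∗`-algebra `A` and `f : Ω → A` left monogenic and real analytic.  If `f`
vanishes on a nonempty `m`-dimensional smooth submanifold `N ⊆ Ω` (described by local `C^∞`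
parametrizations with injective differential), then `f ≡ 0` on `Ω`; in particular the full
gradient of `f` vanishes at every point of `N`. -/
theorem monogenic_identity_theorem {A : Type*} [NormedAddCommGroup A] [NormedSpace ℝ A]
    [FiniteDimensional ℝ A]
    (μ : A →L[ℝ] A →L[ℝ] A) (e : A)
    (he : ∀ a : A, μ e a = a ∧ μ a e = a)
    (hLA : ∀ a b : A, μ (μ a a) b = μ a (μ a b))
    (hRA : ∀ a b : A, μ (μ a b) b = μ a (μ b b))
    (m : ℕ) (hm : 1 ≤ m) (v : Fin (m + 1) → A)
    (hv0 : v 0 = e)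
    (hvsq : ∀ s, s ≠ 0 → μ (v s) (v s) = -e)
    (hvanti : ∀ s t, s ≠ 0 → t ≠ 0 → s ≠ t → μ (v s) (v t) = -μ (v t) (v s))
    (hvli : LinearIndependent ℝ v)
    (Ω : Set ((Fin (m + 1)) → ℝ)) (hΩopen : IsOpen Ω) (hΩconn : IsConnected Ω)
    (f : ((Fin (m + 1)) → ℝ) → A)
    (hfan : AnalyticOnNhd ℝ f Ω)
    (hmono : ∀ x ∈ Ω, ∑ s, μ (v s) (fderiv ℝ f x (Pi.single s 1)) = 0)
    (N : Set ((Fin (m + 1)) → ℝ)) (hNne : N.Nonempty) (hNΩ : N ⊆ Ω)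
    (hNmanifold : ∀ y ∈ N, ∃ (ψ : ((Fin m) → ℝ) → ((Fin (m + 1)) → ℝ))
        (U : Set ((Fin m) → ℝ)), IsOpen U ∧ 0 ∈ U ∧ ContDiffOn ℝ (⊤ : ℕ∞) ψ U ∧
        ψ 0 = y ∧ ψ '' U ⊆ N ∧ Function.Injective (fderiv ℝ ψ 0))
    (hfN : ∀ y ∈ N, f y = 0) :
    (∀ x ∈ Ω, f x = 0) ∧
    (∀ y ∈ N, ∀ s : Fin (m + 1), fderiv ℝ f y (Pi.single s 1) = 0) := by
  have keyalg := mono_keyalg μ e he hLA m v hv0 hvsq hvanti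
  have hgrad : ∀ y ∈ N, ∀ s, fderiv ℝ f y (Pi.single s 1) = 0 := fun y hy =>
    mono_grad_vanish μ e he hLA m v hv0 hvsq hvanti Ω hΩopen N hNΩ hNmanifold
      f hfan hmono hfN keyalg y hy
  refine ⟨?_, hgrad⟩
  obtain ⟨y₀, hy₀⟩ := hNne
  have hall : ∀ n, iteratedFDeriv ℝ n f y₀ = 0 := fun n =>
    mono_iter_vanish μ e he hLA m v hv0 hvsq hvanti Ω hΩopen N hNΩ hNmanifold
      n f hfan hmono hfN y₀ hy₀
  obtain ⟨p, hp⟩ := hfan y₀ (hNΩ hy₀)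
  obtain ⟨r, hr⟩ := hp
  have hev : f =ᶠ[nhds y₀] 0 := by
    filter_upwards [EMetric.ball_mem_nhds y₀ hr.r_pos] with z hz
    have hz' : z - y₀ ∈ Metric.eball (0 : (Fin (m + 1)) → ℝ) r := by
      simpa [Metric.mem_eball, edist_eq_enorm_sub] using hz
    have hs := hr.hasSum_iteratedFDeriv hz'
    simp only [hall, ContinuousMultilinearMap.zero_apply, smul_zero] at hs
    have hfz : f (y₀ + (z - y₀)) = 0 := hs.unique hasSum_zero
    simpa using hfz
  exact fun x hx => hfan.eqOn_zero_of_preconnected_of_eventuallyEq_zero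
    hΩconn.isPreconnected (hNΩ hy₀) hev hx
end
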